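/- arXiv:1805.11244 — 6 statements merged into one kernel-verified Lean document; each statement's English description precedes it below -/
import Mathlib

section
/- With d_{(i,j,k)} defined by the recursion d_{(i,j,k)} = -(1/(j+1)) ∑_{m=0}^{j} C(j+1,m) B_m d_{(i-1,j+1-m,k)} for i ≥ 2, the exponential generating functions D_{(i,k)}(t) := ∑_{j≥0} d_{(i,j,k)} t^j/j! satisfy D_{(i,k)}(t)·(1-e^t) = D_{(i-1,k)}(t) - d_{(i-1,0,k)} for all i ≥ 2. -/
open Finset PowerSeries

/-- The sequence d_{(i,j,k)}: d_{(1,j,k)} = 0 if k > 1+j,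
d_{(1,j,k)} = (-1)^j j! (-1)^{j+1-k} B_{j+1-k}/(j+1-k)! if k ≤ 1+j, and
d_{(i,j,k)} = -(1/(j+1)) ∑_{m=0}^j C(j+1,m) B_m d_{(i-1,j+1-m,k)} for i ≥ 2.
(The value at i = 0 is irrelevant and set to 0.) -/
def suzukiD (k : ℕ) : ℕ → ℕ → ℚ
  | 0, _ => 0
  | 1, j => if 1 + j < k then 0
      else (-1) ^ j * j.factorial *
        ((-1) ^ (j + 1 - k) * bernoulli (j + 1 - k) / (j + 1 - k).factorial)
  | (i + 2), j =>
      -(1 / (j + 1 : ℚ)) *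
        ∑ m ∈ Finset.range (j + 1),
          ((j + 1).choose m : ℚ) * bernoulli m * suzukiD k (i + 1) (j + 1 - m)

lemma suzukiD_key (k i' : ℕ) :
    (PowerSeries.mk fun j => suzukiD k (i'+2) j / j.factorial) * X =
      -(bernoulliPowerSeries ℚ *
        ((PowerSeries.mk fun j => suzukiD k (i'+1) j / j.factorial) -
          PowerSeries.C (suzukiD k (i'+1) 0))) := by
  ext n
  rcases n with _ | j
  · simp [PowerSeries.coeff_zero_eq_constantCoeff, bernoulliPowerSeries]
  · rw [PowerSeries.coeff_succ_mul_X, map_neg, PowerSeries.coeff_mul,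
      Finset.Nat.sum_antidiagonal_eq_sum_range_succ_mk, Finset.sum_range_succ]
    have hG0 : (PowerSeries.coeff 0)
        ((PowerSeries.mk fun j => suzukiD k (i'+1) j / j.factorial) -
          PowerSeries.C (suzukiD k (i'+1) 0)) = 0 := by
      simp
    rw [show j + 1 - (j+1) = 0 from by omega, hG0, mul_zero, add_zero, PowerSeries.coeff_mk]
    rw [show suzukiD k (i'+2) j = -(1 / (j + 1 : ℚ)) *
        ∑ m ∈ Finset.range (j + 1),
          ((j + 1).choose m : ℚ) * bernoulli m * suzukiD k (i' + 1) (j + 1 - m) from rfl]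
    rw [neg_mul, neg_div, neg_inj, mul_comm, mul_one_div, div_div, Finset.sum_div]
    refine Finset.sum_congr rfl fun m hm => ?_
    rw [Finset.mem_range] at hm
    have hm' : m ≤ j + 1 := by omega
    have hne : (j + 1 : ℕ) - m ≠ 0 := by omega
    simp only [bernoulliPowerSeries, PowerSeries.coeff_mk, map_sub, PowerSeries.coeff_C,
      if_neg hne, sub_zero, Algebra.algebraMap_self, map_div₀, RingHom.id_apply]
    have hkey : ((j+1).choose m : ℚ) * m.factorial * ((j+1) - m).factorial
        = ((j+1).factorial : ℚ) := by
      exact_mod_cast congrArg (Nat.cast (R := ℚ))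
        (Nat.choose_mul_factorial_mul_factorial hm')
    have h1 : (m.factorial : ℚ) ≠ 0 := Nat.cast_ne_zero.2 (Nat.factorial_ne_zero m)
    have h2 : (((j+1) - m).factorial : ℚ) ≠ 0 := Nat.cast_ne_zero.2 (Nat.factorial_ne_zero _)
    have h3 : ((j:ℚ) + 1) * j.factorial ≠ 0 := by
      push_cast
      positivity
    have hf : (((j+1)).factorial : ℚ) = ((j:ℚ)+1) * j.factorial := by
      push_cast [Nat.factorial_succ]; ring
    field_simp
    linear_combination (bernoulli m * suzukiD k (i'+1) (j+1-m)) * hkey +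
      (bernoulli m * suzukiD k (i'+1) (j+1-m)) * hf

/-- for i ≥ 2, the exponential generating functions
D_{(i,k)}(t) := ∑_{j≥0} d_{(i,j,k)} t^j/j! satisfy
D_{(i,k)}(t)·(1-e^t) = D_{(i-1,k)}(t) - d_{(i-1,0,k)}. -/
theorem stmt6 (k i : ℕ) (hk : 1 ≤ k) (hi : 2 ≤ i) :
    (PowerSeries.mk fun j => suzukiD k i j / j.factorial) * (1 - PowerSeries.exp ℚ) =
      (PowerSeries.mk fun j => suzukiD k (i - 1) j / j.factorial) -
        PowerSeries.C (suzukiD k (i - 1) 0) := by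
  obtain ⟨i', rfl⟩ : ∃ i', i = i' + 2 := ⟨i - 2, by omega⟩
  have key := suzukiD_key k i'
  have hX : (X : ℚ⟦X⟧) ≠ 0 := X_ne_zero
  apply mul_right_cancel₀ hX
  have := bernoulliPowerSeries_mul_exp_sub_one ℚ
  calc (PowerSeries.mk fun j => suzukiD k (i'+2) j / j.factorial) * (1 - PowerSeries.exp ℚ) * X
      = (PowerSeries.mk fun j => suzukiD k (i'+2) j / j.factorial) * X * (1 - PowerSeries.exp ℚ) := by ring
    _ = -(bernoulliPowerSeries ℚ *
        ((PowerSeries.mk fun j => suzukiD k (i'+1) j / j.factorial) -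
          PowerSeries.C (suzukiD k (i'+1) 0))) * (1 - PowerSeries.exp ℚ) := by rw [key]
    _ = (bernoulliPowerSeries ℚ * (PowerSeries.exp ℚ - 1)) *
        ((PowerSeries.mk fun j => suzukiD k (i'+1) j / j.factorial) -
          PowerSeries.C (suzukiD k (i'+1) 0)) := by ring
    _ = _ := by rw [this]; simp [Nat.add_sub_cancel]; ring
end

section
/- The generating function identity ∑_{q≥0} d_{(q+k,0,k)} s^q = (-log(1-s)/s)^k holds, where d_{(i,0,k)} is the j=0 value of the sequence d defined by the stated recursion. -/
open Finset PowerSeries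

open Polynomial

noncomputable section SuzukiAux

namespace SuzukiAux

/-- Composition of power series (valid when `constantCoeff f = 0`). -/
def subo (f H : ℚ⟦X⟧) : ℚ⟦X⟧ :=
  PowerSeries.mk fun j => PowerSeries.coeff j (Polynomial.aeval f (trunc (j + 1) H))

variable {f : ℚ⟦X⟧} (hf : constantCoeff f = 0)

theorem coeff_aeval_eq_zero (hf : constantCoeff f = 0) {p : ℚ[X]} {N j : ℕ}
    (hp : (Polynomial.X : ℚ[X]) ^ N ∣ p) (hj : j < N) :
    PowerSeries.coeff j (Polynomial.aeval f p) = 0 := by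
  obtain ⟨r, rfl⟩ := hp
  obtain ⟨g, rfl⟩ := PowerSeries.X_dvd_iff.mpr hf
  rw [map_mul, map_pow, Polynomial.aeval_X]
  rw [mul_pow, mul_assoc, PowerSeries.coeff_X_pow_mul']
  simp [Nat.not_le_of_lt hj]

theorem coeff_aeval_congr (hf : constantCoeff f = 0) {p q : ℚ[X]} {N j : ℕ}
    (h : ∀ m < N, p.coeff m = q.coeff m) (hj : j < N) :
    PowerSeries.coeff j (Polynomial.aeval f p) = PowerSeries.coeff j (Polynomial.aeval f q) := by
  have hdvd : (Polynomial.X : ℚ[X]) ^ N ∣ p - q := by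
    rw [Polynomial.X_pow_dvd_iff]
    intro d hd
    simp [Polynomial.coeff_sub, h d hd]
  have := coeff_aeval_eq_zero hf hdvd hj
  rw [map_sub, map_sub] at this
  linarith [this]

theorem coeff_subo (hf : constantCoeff f = 0) (H : ℚ⟦X⟧) {j N : ℕ} (hj : j < N) :
    PowerSeries.coeff j (subo f H) = PowerSeries.coeff j (Polynomial.aeval f (trunc N H)) := by
  rw [subo, coeff_mk]
  refine coeff_aeval_congr hf (N := j + 1) (fun m hm => ?_) (Nat.lt_succ_self j)
  rw [coeff_trunc, coeff_trunc, if_pos hm, if_pos (lt_of_lt_of_le hm hj)]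

theorem subo_add (H G : ℚ⟦X⟧) : subo f (H + G) = subo f H + subo f G := by
  ext j
  simp [subo, map_add]

theorem subo_C (r : ℚ) : subo f (PowerSeries.C r) = PowerSeries.C r := by
  ext j
  simp only [subo, coeff_mk, trunc_C, Polynomial.aeval_C]
  rfl

theorem subo_one : subo f 1 = 1 := by
  have : (1 : ℚ⟦X⟧) = PowerSeries.C 1 := by simp
  rw [this, subo_C]

theorem subo_mul (hf : constantCoeff f = 0) (H G : ℚ⟦X⟧) :
    subo f (H * G) = subo f H * subo f G := by
  ext j
  rw [subo, coeff_mk]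
  have step1 : PowerSeries.coeff j (Polynomial.aeval f (trunc (j+1) (H * G)))
      = PowerSeries.coeff j (Polynomial.aeval f (trunc (j+1) H * trunc (j+1) G)) := by
    refine coeff_aeval_congr hf (N := j + 1) (fun m hm => ?_) (Nat.lt_succ_self j)
    have h2 := PowerSeries.trunc_trunc_mul_trunc (n := j + 1) H G
    have h3 := congrArg (fun p : ℚ[X] => p.coeff m) h2
    simp only [PowerSeries.coeff_trunc, if_pos hm] at h3
    have h4 : (trunc (j + 1) H * trunc (j + 1) G).coeff m
        = PowerSeries.coeff m ((trunc (j+1) H : ℚ⟦X⟧) * (trunc (j+1) G : ℚ⟦X⟧)) := by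
      rw [← Polynomial.coe_mul, Polynomial.coeff_coe]
    rw [PowerSeries.coeff_trunc, if_pos hm, h4, h3]
  rw [step1, map_mul, PowerSeries.coeff_mul, PowerSeries.coeff_mul]
  refine Finset.sum_congr rfl fun ab hab => ?_
  rw [Finset.HasAntidiagonal.mem_antidiagonal] at hab
  rw [coeff_subo hf H (N := j+1) (by omega), coeff_subo hf G (N := j+1) (by omega)]

theorem subo_pow (hf : constantCoeff f = 0) (H : ℚ⟦X⟧) (n : ℕ) :
    subo f (H ^ n) = subo f H ^ n := by
  induction n with
  | zero => simpa using subo_one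
  | succ n ih => rw [pow_succ, pow_succ, subo_mul hf, ih]

theorem subo_sub (H G : ℚ⟦X⟧) : subo f (H - G) = subo f H - subo f G := by
  have := subo_add (f := f) (H - G) G
  rw [sub_add_cancel] at this
  linear_combination -this

theorem subo_X (hf : constantCoeff f = 0) : subo f X = f := by
  ext j
  rw [subo, coeff_mk]
  rcases j with _ | j
  · have : trunc 1 (X : ℚ⟦X⟧) = 0 := by
      ext m
      rw [PowerSeries.coeff_trunc]
      rcases m with _ | m
      · simp
      · simp
    rw [this]
    simp [← hf, PowerSeries.coeff_zero_eq_constantCoeff]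
  · rw [PowerSeries.trunc_X_of (by omega), Polynomial.aeval_X]

theorem constantCoeff_subo (H : ℚ⟦X⟧) :
    PowerSeries.coeff 0 (subo f H) = PowerSeries.coeff 0 H := by
  rw [subo, coeff_mk]
  have : trunc 1 H = Polynomial.C (PowerSeries.coeff 0 H) := by
    ext m
    rw [PowerSeries.coeff_trunc]
    rcases m with _ | m <;> simp
  rw [this, Polynomial.aeval_C]
  simp

theorem derivative_subo (hf : constantCoeff f = 0) (H : ℚ⟦X⟧) :
    d⁄dX ℚ (subo f H) = subo f (d⁄dX ℚ H) * d⁄dX ℚ f := by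
  ext j
  rw [PowerSeries.coeff_derivative, coeff_subo hf H (N := j + 2) (by omega)]
  have chain := Derivation.map_aeval (PowerSeries.derivative (R := ℚ)) (trunc (j+2) H) f
  have lhs : PowerSeries.coeff (j+1) (Polynomial.aeval f (trunc (j+2) H)) * (j+1)
      = PowerSeries.coeff j (d⁄dX ℚ (Polynomial.aeval f (trunc (j+2) H))) := by
    rw [PowerSeries.coeff_derivative]
  rw [lhs, chain, smul_eq_mul]
  rw [← PowerSeries.trunc_derivative]
  rw [PowerSeries.coeff_mul, PowerSeries.coeff_mul]
  refine Finset.sum_congr rfl fun ab hab => ?_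
  rw [Finset.HasAntidiagonal.mem_antidiagonal] at hab
  rw [coeff_subo hf _ (N := j + 1) (by omega)]

/-- exp(-X) -/
def Em : ℚ⟦X⟧ := PowerSeries.rescale (-1) (PowerSeries.exp ℚ)

/-- 1 - exp(-PowerSeries.X) -/
def ee : ℚ⟦X⟧ := 1 - Em

/-- PowerSeries.X/(1-exp(-PowerSeries.X)), i.e. the EGF of (-1)^n B_n. -/
def Bt : ℚ⟦X⟧ := PowerSeries.rescale (-1) (bernoulliPowerSeries ℚ)

theorem coeff_Em (n : ℕ) : PowerSeries.coeff n Em = (-1) ^ n / n.factorial := by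
  rw [Em, PowerSeries.coeff_rescale, PowerSeries.coeff_exp]
  simp [div_eq_mul_inv]

theorem coeff_Bt (n : ℕ) : PowerSeries.coeff n Bt = (-1) ^ n * _root_.bernoulli n / n.factorial := by
  rw [Bt, PowerSeries.coeff_rescale, bernoulliPowerSeries, coeff_mk]
  simp [div_eq_mul_inv, mul_assoc]

theorem constantCoeff_ee : constantCoeff ee = 0 := by
  have : PowerSeries.coeff 0 Em = 1 := by rw [coeff_Em]; simp
  rw [ee, map_sub]
  simp only [map_one]
  rw [← PowerSeries.coeff_zero_eq_constantCoeff, this]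
  ring

theorem ee_ne_zero : ee ≠ 0 := by
  intro h
  have : PowerSeries.coeff 1 ee = 0 := by rw [h]; simp
  rw [ee, map_sub, coeff_Em] at this
  norm_num [PowerSeries.coeff_one] at this

theorem Bt_mul_ee : Bt * ee = PowerSeries.X := by
  have h2 := congrArg (PowerSeries.rescale (-1 : ℚ)) (bernoulliPowerSeries_mul_exp_sub_one ℚ)
  rw [map_mul, map_sub, map_one, PowerSeries.rescale_X] at h2
  have hC : (PowerSeries.C) (-1 : ℚ) = -1 := by simp
  rw [hC] at h2
  unfold ee Em Bt
  linear_combination -h2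

theorem derivative_Em : d⁄dX ℚ Em = -Em := by
  ext n
  rw [PowerSeries.coeff_derivative, coeff_Em, map_neg, coeff_Em, Nat.factorial_succ]
  have h1 : ((n + 1 : ℕ) : ℚ) ≠ 0 := by positivity
  have h2 : (n.factorial : ℚ) ≠ 0 := by exact_mod_cast n.factorial_ne_zero
  field_simp
  push_cast
  ring

theorem derivative_ee : d⁄dX ℚ ee = 1 - ee := by
  rw [ee, map_sub, derivative_Em]
  simp

/-- -log(1-PowerSeries.X)/PowerSeries.X = ∑ PowerSeries.X^n/(n+1) -/
def Ls : ℚ⟦X⟧ := PowerSeries.mk fun n => (1 : ℚ) / (n + 1)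

/-- -log(1-PowerSeries.X) -/
def ll : ℚ⟦X⟧ := PowerSeries.X * Ls

theorem derivative_ll : d⁄dX ℚ ll = PowerSeries.mk fun _ => (1 : ℚ) := by
  ext n
  rw [PowerSeries.coeff_derivative, ll, PowerSeries.coeff_succ_X_mul, Ls, coeff_mk, coeff_mk]
  have : ((n : ℚ) + 1) ≠ 0 := by positivity
  field_simp

theorem one_sub_X_mul_geom : (1 - PowerSeries.X : ℚ⟦X⟧) * PowerSeries.mk (fun _ => (1 : ℚ)) = 1 := by
  ext n
  rw [sub_mul, one_mul, map_sub]
  rcases n with _ | n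
  · simp [PowerSeries.coeff_zero_eq_constantCoeff]
  · rw [PowerSeries.coeff_succ_X_mul]
    simp [PowerSeries.coeff_one]

theorem subo_ee_ll : subo ee ll = PowerSeries.X := by
  have hee := constantCoeff_ee
  apply PowerSeries.derivative.ext (R := ℚ)
  · rw [derivative_subo hee, derivative_ll, PowerSeries.derivative_X, derivative_ee]
    have h1 : subo ee ((1 - PowerSeries.X) * PowerSeries.mk (fun _ => (1:ℚ))) = 1 := by
      rw [one_sub_X_mul_geom, subo_one]
    rw [subo_mul hee, subo_sub, subo_one, subo_X hee] at h1
    calc subo ee (PowerSeries.mk fun _ => (1:ℚ)) * (1 - ee)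
        = (1 - ee) * subo ee (PowerSeries.mk fun _ => (1:ℚ)) := by ring
      _ = 1 := h1
  · rw [← PowerSeries.coeff_zero_eq_constantCoeff, constantCoeff_subo, ll]
    simp

theorem subo_ee_Ls : subo ee Ls = Bt := by
  have h : ee * subo ee Ls = ee * Bt := by
    have h1 : subo ee (PowerSeries.X * Ls) = PowerSeries.X := subo_ee_ll
    rw [subo_mul constantCoeff_ee, subo_X constantCoeff_ee] at h1
    rw [h1, mul_comm, Bt_mul_ee]
  exact mul_left_cancel₀ ee_ne_zero h

end SuzukiAux

namespace SuzukiAux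

/-- EGF-normalized version of `suzukiD`. -/
def Gg (k i : ℕ) : ℚ⟦X⟧ := PowerSeries.mk fun j => (-1) ^ j * suzukiD k i j / j.factorial

/-- The shifted s-side series. -/
def Hs (k i : ℕ) : ℚ⟦X⟧ :=
  PowerSeries.mk fun n => if k ≤ n + i then PowerSeries.coeff (n + i - k) (Ls ^ k) else 0

theorem Gg_one {k : ℕ} (hk : 1 ≤ k) : Gg k 1 = PowerSeries.X ^ (k - 1) * Bt := by
  ext j
  rw [Gg, coeff_mk, PowerSeries.coeff_X_pow_mul', coeff_Bt]
  simp only [suzukiD]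
  by_cases h : 1 + j < k
  · rw [if_pos h, if_neg (by omega)]
    simp
  · rw [if_neg h, if_pos (by omega)]
    have hidx : j + 1 - k = j - (k - 1) := by omega
    have hfac : (j.factorial : ℚ) ≠ 0 := by exact_mod_cast j.factorial_ne_zero
    have hsq : (-1 : ℚ) ^ j * (-1) ^ j = 1 := by
      rw [← mul_pow]; norm_num
    rw [← hidx]
    calc (-1:ℚ) ^ j * ((-1) ^ j * j.factorial *
          ((-1) ^ (j + 1 - k) * _root_.bernoulli (j + 1 - k) / (j + 1 - k).factorial)) / j.factorial
        = ((-1:ℚ) ^ j * (-1) ^ j) * ((j.factorial : ℚ) / j.factorial) *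
          ((-1) ^ (j + 1 - k) * _root_.bernoulli (j + 1 - k) / (j + 1 - k).factorial) := by ring
      _ = (-1) ^ (j + 1 - k) * _root_.bernoulli (j + 1 - k) / (j + 1 - k).factorial := by
          rw [hsq, div_self hfac]; ring

theorem Hs_one {k : ℕ} (hk : 1 ≤ k) : Hs k 1 = PowerSeries.X ^ (k - 1) * Ls ^ k := by
  ext n
  rw [Hs, coeff_mk, PowerSeries.coeff_X_pow_mul']
  by_cases h : k ≤ n + 1
  · rw [if_pos h, if_pos (by omega)]
    have h2 : n + 1 - k = n - (k - 1) := by omega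
    rw [h2]
  · rw [if_neg h, if_neg (by omega)]

theorem Hs_shift (k i : ℕ) :
    Hs k (i + 1) - PowerSeries.C (PowerSeries.coeff 0 (Hs k (i + 1)))
      = PowerSeries.X * Hs k (i + 2) := by
  ext n
  rw [map_sub, PowerSeries.coeff_C]
  rcases n with _ | m
  · simp [PowerSeries.coeff_zero_eq_constantCoeff]
  · rw [if_neg (by omega), sub_zero, PowerSeries.coeff_succ_X_mul, Hs, Hs, coeff_mk, coeff_mk]
    have h1 : m + 1 + (i + 1) = m + (i + 2) := by omega
    rw [h1]

theorem Gg_rec (k i : ℕ) :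
    PowerSeries.X * Gg k (i + 2)
      = Bt * (Gg k (i + 1) - PowerSeries.C (PowerSeries.coeff 0 (Gg k (i + 1)))) := by
  ext n
  rcases n with _ | j
  · simp [PowerSeries.coeff_zero_eq_constantCoeff]
  · rw [PowerSeries.coeff_succ_X_mul, PowerSeries.coeff_mul,
      Finset.Nat.sum_antidiagonal_eq_sum_range_succ_mk, Finset.sum_range_succ]
    have hlast : PowerSeries.coeff (j + 1 - (j+1))
        (Gg k (i + 1) - PowerSeries.C (PowerSeries.coeff 0 (Gg k (i + 1)))) = 0 := by
      simp
    rw [hlast, mul_zero, add_zero, Gg, coeff_mk]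
    simp only [suzukiD]
    rw [Finset.mul_sum, Finset.mul_sum, Finset.sum_div]
    refine Finset.sum_congr rfl fun m hm => ?_
    rw [Finset.mem_range] at hm
    have hm1 : m ≤ j + 1 := by omega
    rw [map_sub, PowerSeries.coeff_C, if_neg (by omega), sub_zero, coeff_Bt, Gg, coeff_mk]
    have hsum : m + (j + 1 - m) = j + 1 := by omega
    have h3 : (-1:ℚ) ^ m * (-1) ^ (j + 1 - m) = (-1) ^ (j + 1) := by
      rw [← pow_add, hsum]
    have hLj : (-1:ℚ) ^ j = -((-1:ℚ) ^ m * (-1) ^ (j + 1 - m)) := by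
      rw [h3, pow_succ]
      ring
    have hfact : ((j + 1).factorial : ℚ) = (j + 1) * j.factorial := by
      rw [Nat.factorial_succ]; push_cast; ring
    rw [Nat.cast_choose ℚ hm1, hfact, hLj]
    have hf1 : (m.factorial : ℚ) ≠ 0 := by exact_mod_cast m.factorial_ne_zero
    have hf2 : ((j + 1 - m).factorial : ℚ) ≠ 0 := by exact_mod_cast (j + 1 - m).factorial_ne_zero
    have hf3 : (j.factorial : ℚ) ≠ 0 := by exact_mod_cast j.factorial_ne_zero
    have hj1 : ((j : ℚ) + 1) ≠ 0 := by positivity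
    field_simp

end SuzukiAux

namespace SuzukiAux

theorem invariant {k : ℕ} (hk : 1 ≤ k) : ∀ i, Gg k (i + 1) = subo ee (Hs k (i + 1)) := by
  intro i
  induction i with
  | zero =>
    rw [Gg_one hk, Hs_one hk, subo_mul constantCoeff_ee, subo_pow constantCoeff_ee,
      subo_pow constantCoeff_ee, subo_X constantCoeff_ee, subo_ee_Ls]
    obtain ⟨K, rfl⟩ : ∃ K, k = K + 1 := ⟨k - 1, by omega⟩
    simp only [Nat.add_sub_cancel]
    rw [← Bt_mul_ee]
    ring
  | succ i ih =>
    have hrec := Gg_rec k i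
    rw [ih, constantCoeff_subo] at hrec
    rw [← subo_C (f := ee) (PowerSeries.coeff 0 (Hs k (i + 1))), ← subo_sub, Hs_shift,
      subo_mul constantCoeff_ee, subo_X constantCoeff_ee] at hrec
    have h2 : Bt * (ee * subo ee (Hs k (i + 2))) = PowerSeries.X * subo ee (Hs k (i + 2)) := by
      rw [← Bt_mul_ee]; ring
    rw [h2] at hrec
    exact mul_left_cancel₀ PowerSeries.X_ne_zero hrec

end SuzukiAux

/-- ∑_{q≥0} d_{(q+k,0,k)} s^q = (-log(1-s)/s)^k, where
-log(1-s)/s = ∑_{n≥0} s^n/(n+1). -/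
theorem stmt9 (k : ℕ) (hk : 1 ≤ k) :
    (PowerSeries.mk fun q => suzukiD k (q + k) 0) =
      (PowerSeries.mk fun n => (1 : ℚ) / (n + 1)) ^ k := by
  obtain ⟨K, rfl⟩ : ∃ K, k = K + 1 := ⟨k - 1, by omega⟩
  ext q
  rw [PowerSeries.coeff_mk]
  have hinv := SuzukiAux.invariant (k := K + 1) (by omega) (q + K)
  have h0 : PowerSeries.coeff 0 (SuzukiAux.Gg (K + 1) (q + K + 1))
      = suzukiD (K + 1) (q + K + 1) 0 := by
    rw [SuzukiAux.Gg, PowerSeries.coeff_mk]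
    simp
  have h1 : PowerSeries.coeff 0 (SuzukiAux.subo SuzukiAux.ee (SuzukiAux.Hs (K + 1) (q + K + 1)))
      = PowerSeries.coeff q (SuzukiAux.Ls ^ (K + 1)) := by
    rw [SuzukiAux.constantCoeff_subo, SuzukiAux.Hs, PowerSeries.coeff_mk]
    rw [if_pos (by omega), show 0 + (q + K + 1) - (K + 1) = q from by omega]
  have h2 : suzukiD (K + 1) (q + (K + 1)) 0 = PowerSeries.coeff q (SuzukiAux.Ls ^ (K + 1)) := by
    rw [show q + (K + 1) = q + K + 1 from rfl, ← h0, hinv, h1]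
  rw [h2]
  rfl
end SuzukiAux
end

section
/- For all i ≥ 1 and q ≥ 0, d_{(q+i, 0, i)} = ∑_{ℓ₁+⋯+ℓ_i = q} 1/((ℓ₁+1)⋯(ℓ_i+1)), where the sum is over tuples of nonnegative integers. -/
open Finset PowerSeries

noncomputable section SuzukiAux

/-- The series `E` with `X * E = exp - 1`. -/
def sE : PowerSeries ℚ := PowerSeries.mk fun n => (1 : ℚ) / (n + 1).factorial

/-- `u = exp - 1`. -/
def sU : PowerSeries ℚ := PowerSeries.exp ℚ - 1

lemma sU_eq : sU = X * sE := by
  ext n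
  cases n with
  | zero => simp [sU, sE, constantCoeff_exp]
  | succ n => simp [sU, sE, coeff_succ_X_mul, coeff_exp, Nat.factorial_succ,
      Algebra.algebraMap_self_apply]

lemma constantCoeff_sE : constantCoeff sE = 1 := by
  simp [sE, ← coeff_zero_eq_constantCoeff]

lemma sU_pow (m : ℕ) : sU ^ m = X ^ m * sE ^ m := by
  rw [sU_eq, mul_pow]

lemma X_pow_dvd_sU_pow (m : ℕ) : (X : PowerSeries ℚ) ^ m ∣ sU ^ m :=
  ⟨sE ^ m, sU_pow m⟩

lemma coeff_sU_pow_self (m : ℕ) : coeff m (sU ^ m) = 1 := by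
  have := coeff_X_pow_mul (sE ^ m) m 0
  rw [zero_add] at this
  rw [sU_pow, this, coeff_zero_eq_constantCoeff, map_pow, constantCoeff_sE, one_pow]

lemma coeff_sU_pow_mul (m n : ℕ) (f : PowerSeries ℚ) :
    coeff (n + m) (sU ^ m * f) = coeff n (sE ^ m * f) := by
  rw [sU_pow, mul_assoc, coeff_X_pow_mul]

lemma sDeriv_exp : d⁄dX ℚ (PowerSeries.exp ℚ) = PowerSeries.exp ℚ := by
  ext n
  simp [PowerSeries.coeff_derivative, coeff_exp, Algebra.algebraMap_self_apply, Nat.factorial_succ]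
  field_simp

lemma deriv_sU : d⁄dX ℚ sU = sU + 1 := by
  simp [sU, sDeriv_exp]

/-- If `f(0) = 0` and `X^m ∣ f'` then `X^(m+1) ∣ f`. -/
lemma X_pow_dvd_of_deriv {f : PowerSeries ℚ} {m : ℕ} (h0 : constantCoeff f = 0)
    (hd : (X : PowerSeries ℚ) ^ m ∣ d⁄dX ℚ f) : (X : PowerSeries ℚ) ^ (m + 1) ∣ f := by
  rw [X_pow_dvd_iff] at hd ⊢
  intro n hn
  cases n with
  | zero => simpa using h0
  | succ j =>
    have hj : j < m := by omega
    have := hd j hj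
    rw [PowerSeries.coeff_derivative] at this
    have hne : ((j : ℚ) + 1) ≠ 0 := by positivity
    exact (mul_eq_zero.mp this).resolve_right hne

/-- The series `∑ X^n/(n+1)`. -/
def sM : PowerSeries ℚ := PowerSeries.mk fun n => (1 : ℚ) / (n + 1)

/-- `sS k q` is the coefficient `[X^q] sM^k`; it will turn out to equal the
antidiagonal-tuple sum. -/
def sS (k q : ℕ) : ℚ := coeff q (sM ^ k)

lemma sS_one (q : ℕ) : sS 1 q = 1 / (q + 1) := by
  simp [sS, sM]

lemma sS_zero (q : ℕ) : sS 0 q = if q = 0 then 1 else 0 := by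
  simp [sS, coeff_one]

lemma sS_succ (k q : ℕ) : sS (k + 1) q =
    ∑ ab ∈ Finset.HasAntidiagonal.antidiagonal q, sS 1 ab.1 * sS k ab.2 := by
  rw [sS, pow_succ, mul_comm (sM ^ k) sM, coeff_mul]
  exact Finset.sum_congr rfl fun ab _ => by simp only [sS, pow_one]

/-- Truncated version of `log(1+u)^k`. -/
def sT (k N : ℕ) : PowerSeries ℚ :=
  ∑ p ∈ Finset.range (N + 1), C ((-1) ^ p * sS k p) * sU ^ (p + k)

lemma fin_one (N : ℕ) : (X : PowerSeries ℚ) ^ (N + 2) ∣ (X - sT 1 N) := by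
  apply X_pow_dvd_of_deriv
  · simp only [map_sub, sT, map_sum]
    have : ∀ p ∈ Finset.range (N + 1),
        constantCoeff (C ((-1) ^ p * sS 1 p) * sU ^ (p + 1)) = 0 := by
      intro p _
      rw [map_mul, map_pow]
      have : constantCoeff sU = 0 := by simp [sU, constantCoeff_exp]
      rw [this, zero_pow (by omega), mul_zero]
    rw [Finset.sum_congr rfl this]
    simp
  · have hderiv : d⁄dX ℚ (X - sT 1 N) = (-1 : PowerSeries ℚ) ^ (N + 1) * sU ^ (N + 1) := by
      rw [map_sub, derivative_X, sT, map_sum]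
      have step : ∀ p ∈ Finset.range (N + 1),
          d⁄dX ℚ (C ((-1) ^ p * sS 1 p) * sU ^ (p + 1)) = (-sU) ^ p * (sU + 1) := by
        intro p _
        rw [Derivation.leibniz, Derivation.leibniz_pow, derivative_C, deriv_sU]
        simp only [smul_eq_mul, mul_zero, zero_add, Nat.add_sub_cancel, nsmul_eq_mul]
        rw [add_zero, sS_one, ← map_natCast (C (R := ℚ)) (p + 1), ← mul_assoc, ← map_mul]
        have hval : ((-1 : ℚ) ^ p * (1 / ((p : ℚ) + 1))) * (((p + 1 : ℕ) : ℚ)) = (-1) ^ p := by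
          push_cast
          field_simp
        rw [hval, map_pow, map_neg, map_one, neg_pow sU]
        ring
      rw [Finset.sum_congr rfl step, ← Finset.sum_mul]
      have geom := geom_sum_mul (-sU) (N + 1)
      have : (∑ i ∈ Finset.range (N + 1), (-sU) ^ i) * (sU + 1) = 1 - (-sU) ^ (N + 1) := by
        have h2 : (∑ i ∈ Finset.range (N + 1), (-sU) ^ i) * (sU + 1)
            = -((∑ i ∈ Finset.range (N + 1), (-sU) ^ i) * (-sU - 1)) := by ring
        rw [h2, geom]; ring
      rw [this, neg_pow sU]
      ring
    rw [hderiv]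
    exact Dvd.dvd.mul_left (X_pow_dvd_sU_pow (N + 1)) _

lemma sT_zero (N : ℕ) : sT 0 N = 1 := by
  rw [sT, Finset.sum_eq_single 0]
  · simp [sS_zero]
  · intro p _ hp
    rw [sS_zero, if_neg hp, mul_zero, map_zero, zero_mul]
  · intro h
    exact absurd (Finset.mem_range.mpr (by omega)) h

lemma X_dvd_sT_one (N : ℕ) : (X : PowerSeries ℚ) ∣ sT 1 N := by
  apply Finset.dvd_sum
  intro p _
  exact Dvd.dvd.mul_left (dvd_pow (⟨sE, sU_eq⟩ : (X : PowerSeries ℚ) ∣ sU) (by omega)) _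

lemma sT_mul (k N : ℕ) :
    (X : PowerSeries ℚ) ^ (N + k + 2) ∣ sT 1 N * sT k N - sT (k + 1) N := by
  have hprod : sT 1 N * sT k N =
      ∑ ab ∈ Finset.range (N + 1) ×ˢ Finset.range (N + 1),
        C ((-1) ^ (ab.1 + ab.2) * (sS 1 ab.1 * sS k ab.2)) * sU ^ (ab.1 + ab.2 + (k + 1)) := by
    rw [sT, sT, Finset.sum_mul_sum, Finset.sum_product]
    refine Finset.sum_congr rfl fun a _ => Finset.sum_congr rfl fun b _ => ?_
    rw [mul_mul_mul_comm, ← map_mul, ← pow_add]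
    congr 1
    · congr 1
      rw [pow_add]
      ring
    · congr 1
      omega
  rw [hprod, ← Finset.sum_filter_add_sum_filter_not
      (Finset.range (N + 1) ×ˢ Finset.range (N + 1)) (fun ab => ab.1 + ab.2 ≤ N)]
  have hA : ∑ ab ∈ (Finset.range (N + 1) ×ˢ Finset.range (N + 1)).filter
        (fun ab => ab.1 + ab.2 ≤ N),
        C ((-1) ^ (ab.1 + ab.2) * (sS 1 ab.1 * sS k ab.2)) * sU ^ (ab.1 + ab.2 + (k + 1))
      = sT (k + 1) N := by
    rw [sT]
    have hbij : ∑ ab ∈ (Finset.range (N + 1) ×ˢ Finset.range (N + 1)).filter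
          (fun ab => ab.1 + ab.2 ≤ N),
          C ((-1) ^ (ab.1 + ab.2) * (sS 1 ab.1 * sS k ab.2)) * sU ^ (ab.1 + ab.2 + (k + 1))
        = ∑ p ∈ Finset.range (N + 1), ∑ ab ∈ Finset.HasAntidiagonal.antidiagonal p,
          C ((-1) ^ p * (sS 1 ab.1 * sS k ab.2)) * sU ^ (p + (k + 1)) := by
      rw [Finset.sum_sigma']
      refine Finset.sum_nbij' (fun ab => ⟨ab.1 + ab.2, ab⟩) (fun x => x.2) ?_ ?_ ?_ ?_ ?_
      · intro ab hab
        simp only [Finset.mem_filter, Finset.mem_product, Finset.mem_range] at hab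
        exact Finset.mem_sigma.mpr ⟨Finset.mem_range.mpr
          (show ab.1 + ab.2 < N + 1 by omega), Finset.HasAntidiagonal.mem_antidiagonal.mpr rfl⟩
      · intro x hx
        simp only [Finset.mem_sigma, Finset.mem_range, Finset.HasAntidiagonal.mem_antidiagonal] at hx
        simp only [Finset.mem_filter, Finset.mem_product, Finset.mem_range]
        omega
      · intro ab _; rfl
      · intro x hx
        simp only [Finset.mem_sigma, Finset.mem_range, Finset.HasAntidiagonal.mem_antidiagonal] at hx
        exact Sigma.ext (by simp [hx.2]) (by simp)
      · intro ab hab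
        rfl
    rw [hbij]
    refine Finset.sum_congr rfl fun p _ => ?_
    rw [← Finset.sum_mul, ← map_sum, sS_succ]
    congr 2
    rw [Finset.mul_sum]
  rw [hA]
  have : sT (k + 1) N + ∑ ab ∈ (Finset.range (N + 1) ×ˢ Finset.range (N + 1)).filter
        (fun ab => ¬ ab.1 + ab.2 ≤ N),
        C ((-1) ^ (ab.1 + ab.2) * (sS 1 ab.1 * sS k ab.2)) * sU ^ (ab.1 + ab.2 + (k + 1))
      - sT (k + 1) N
      = ∑ ab ∈ (Finset.range (N + 1) ×ˢ Finset.range (N + 1)).filter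
        (fun ab => ¬ ab.1 + ab.2 ≤ N),
        C ((-1) ^ (ab.1 + ab.2) * (sS 1 ab.1 * sS k ab.2)) * sU ^ (ab.1 + ab.2 + (k + 1)) := by
    ring
  rw [this]
  apply Finset.dvd_sum
  intro ab hab
  simp only [Finset.mem_filter, Finset.mem_product, Finset.mem_range, not_le] at hab
  refine Dvd.dvd.mul_left (dvd_trans (pow_dvd_pow X (by omega)) (X_pow_dvd_sU_pow _)) _

lemma fin_all (k N : ℕ) : (X : PowerSeries ℚ) ^ (N + k + 1) ∣ ((X : PowerSeries ℚ) ^ k - sT k N) := by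
  induction k with
  | zero => rw [sT_zero]; simp
  | succ k ih =>
    have key : (X : PowerSeries ℚ) ^ (k + 1) - sT (k + 1) N
        = X ^ k * (X - sT 1 N) + sT 1 N * (X ^ k - sT k N)
          + (sT 1 N * sT k N - sT (k + 1) N) := by ring
    rw [key]
    refine dvd_add (dvd_add ?_ ?_) ?_
    · obtain ⟨g, hg⟩ := fin_one N
      rw [hg]
      exact ⟨g, by ring⟩
    · obtain ⟨g, hg⟩ := ih
      obtain ⟨h, hh⟩ := X_dvd_sT_one N
      rw [hg, hh]
      exact ⟨h * g, by ring⟩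
    · have := sT_mul k N
      exact dvd_trans (pow_dvd_pow X (by omega)) this



def sF (k n : ℕ) : PowerSeries ℚ := PowerSeries.mk fun j => suzukiD k n j / j.factorial

def sc (k n : ℕ) : ℚ := suzukiD k n 0

lemma coeff_bps (n : ℕ) : coeff n (bernoulliPowerSeries ℚ) = bernoulli n / n.factorial := by
  simp [bernoulliPowerSeries, coeff_mk, Algebra.algebraMap_self_apply]

lemma rec1 (k n : ℕ) : X * sF k (n + 2) =
    bernoulliPowerSeries ℚ * (C (sc k (n + 1)) - sF k (n + 1)) := by
  ext j
  cases j with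
  | zero =>
    rw [coeff_zero_eq_constantCoeff, map_mul, map_mul, constantCoeff_X, zero_mul,
      map_sub, constantCoeff_C]
    have : constantCoeff (sF k (n + 1)) = sc k (n + 1) := by
      rw [← coeff_zero_eq_constantCoeff]
      simp [sF, sc]
    rw [this, sub_self, mul_zero]
  | succ j =>
    rw [coeff_succ_X_mul, coeff_mul, Finset.Nat.sum_antidiagonal_eq_sum_range_succ_mk,
      Finset.sum_range_succ]
    have hlast : coeff (j + 1) (bernoulliPowerSeries ℚ) *
        coeff (j + 1 - (j + 1)) (C (sc k (n + 1)) - sF k (n + 1)) = 0 := by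
      rw [Nat.sub_self, map_sub, coeff_zero_C]
      have : coeff 0 (sF k (n + 1)) = sc k (n + 1) := by simp [sF, sc]
      rw [this, sub_self, mul_zero]
    rw [hlast, add_zero]
    have hterm : ∀ m ∈ Finset.range (j + 1),
        coeff m (bernoulliPowerSeries ℚ) *
          coeff (j + 1 - m) (C (sc k (n + 1)) - sF k (n + 1))
        = -(bernoulli m / m.factorial * (suzukiD k (n + 1) (j + 1 - m) / (j + 1 - m).factorial)) := by
      intro m hm
      have hm' : m < j + 1 := Finset.mem_range.mp hm
      rw [coeff_bps, map_sub, coeff_C, if_neg (by omega), zero_sub]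
      simp [sF]
    rw [Finset.sum_congr rfl hterm]
    simp only [sF, coeff_mk]
    rw [suzukiD]
    rw [Finset.mul_sum, Finset.sum_div]
    refine Finset.sum_congr rfl fun m hm => ?_
    have hm' : m < j + 1 := Finset.mem_range.mp hm
    rw [Nat.cast_choose ℚ (by omega : m ≤ j + 1)]
    have h1 : ((j + 1).factorial : ℚ) = (j + 1) * j.factorial := by
      rw [Nat.factorial_succ]; push_cast; ring
    have f1 : (m.factorial : ℚ) ≠ 0 := Nat.cast_ne_zero.mpr (Nat.factorial_ne_zero m)
    have f2 : ((j + 1 - m).factorial : ℚ) ≠ 0 := Nat.cast_ne_zero.mpr (Nat.factorial_ne_zero _)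
    have f3 : (j.factorial : ℚ) ≠ 0 := Nat.cast_ne_zero.mpr (Nat.factorial_ne_zero j)
    have f4 : ((j : ℚ) + 1) ≠ 0 := by positivity
    rw [h1]
    field_simp



lemma bps_mul_sU : bernoulliPowerSeries ℚ * sU = X :=
  bernoulliPowerSeries_mul_exp_sub_one ℚ

lemma rec2 (k n : ℕ) : sU * sF k (n + 2) = C (sc k (n + 1)) - sF k (n + 1) := by
  apply mul_left_cancel₀ (X_ne_zero : (X : PowerSeries ℚ) ≠ 0)
  calc X * (sU * sF k (n + 2)) = sU * (X * sF k (n + 2)) := by ring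
    _ = sU * (bernoulliPowerSeries ℚ * (C (sc k (n + 1)) - sF k (n + 1))) := by rw [rec1]
    _ = (bernoulliPowerSeries ℚ * sU) * (C (sc k (n + 1)) - sF k (n + 1)) := by ring
    _ = X * (C (sc k (n + 1)) - sF k (n + 1)) := by rw [bps_mul_sU]

lemma base1 (k' : ℕ) : sF (k' + 1) 1 = C ((-1) ^ k') * (X ^ k' * bernoulliPowerSeries ℚ) := by
  ext j
  rcases Nat.lt_or_ge j k' with hj | hj
  · have h1 : coeff j (X ^ k' * bernoulliPowerSeries ℚ) = 0 := by
      have := (X_pow_dvd_iff (n := k') (φ := X ^ k' * bernoulliPowerSeries ℚ)).mp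
        (Dvd.intro _ rfl) j hj
      exact this
    rw [coeff_C_mul, h1, mul_zero]
    simp only [sF, coeff_mk]
    rw [suzukiD, if_pos (by omega)]
    simp
  · obtain ⟨d, rfl⟩ : ∃ d, j = d + k' := ⟨j - k', by omega⟩
    rw [coeff_C_mul, coeff_X_pow_mul, coeff_bps]
    simp only [sF, coeff_mk]
    rw [suzukiD, if_neg (by omega)]
    have hd : d + k' + 1 - (k' + 1) = d := by omega
    rw [hd]
    have f3 : (((d + k').factorial : ℚ)) ≠ 0 := Nat.cast_ne_zero.mpr (Nat.factorial_ne_zero _)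
    have hsign : ((-1 : ℚ)) ^ (d + k') * (-1) ^ d = (-1) ^ k' := by
      have : (d + k') + d = 2 * d + k' := by omega
      rw [← pow_add, this, pow_add, pow_mul, neg_one_sq, one_pow, one_mul]
    field_simp
    have hs2 : ((-1 : ℚ)) ^ (d * 2) = 1 := by rw [mul_comm, pow_mul, neg_one_sq, one_pow]
    linear_combination (bernoulli d * (-1) ^ k') * hs2

lemma closed_form (k' : ℕ) : ∀ n, sU ^ (n + 1) * sF (k' + 1) (n + 1) =
    C ((-1) ^ (n + k')) * ((X : PowerSeries ℚ) ^ (k' + 1) -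
      ∑ m ∈ Finset.Ico 1 (n + 1), C ((-1) ^ (m + k' + 1) * sc (k' + 1) m) * sU ^ m) := by
  intro n
  induction n with
  | zero =>
    rw [Finset.Ico_self, Finset.sum_empty, sub_zero, pow_one, base1]
    calc sU * (C ((-1) ^ k') * (X ^ k' * bernoulliPowerSeries ℚ))
        = C ((-1) ^ k') * (X ^ k' * (bernoulliPowerSeries ℚ * sU)) := by ring
      _ = C ((-1) ^ (0 + k')) * X ^ (k' + 1) := by
          rw [bps_mul_sU, ← pow_succ, zero_add]
  | succ n ih =>
    have step : sU ^ (n + 2) * sF (k' + 1) (n + 2)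
        = C (sc (k' + 1) (n + 1)) * sU ^ (n + 1) - sU ^ (n + 1) * sF (k' + 1) (n + 1) := by
      calc sU ^ (n + 2) * sF (k' + 1) (n + 2)
          = sU ^ (n + 1) * (sU * sF (k' + 1) (n + 2)) := by ring
        _ = sU ^ (n + 1) * (C (sc (k' + 1) (n + 1)) - sF (k' + 1) (n + 1)) := by rw [rec2]
        _ = _ := by ring
    rw [step, ih, Finset.sum_Ico_succ_top (by omega : 1 ≤ n + 1)]
    have hs1 : ((-1 : ℚ)) ^ (n + 1 + k') = -(-1 : ℚ) ^ (n + k') := by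
      have : n + 1 + k' = (n + k') + 1 := by omega
      rw [this, pow_succ]; ring
    have hs2 : ((-1 : ℚ)) ^ (n + 1 + k' + 1) = (-1 : ℚ) ^ (n + k') := by
      have : n + 1 + k' + 1 = (n + k') + 2 := by omega
      rw [this, pow_add, neg_one_sq, mul_one]
    rw [hs1, hs2]
    have hA : C ((-1 : ℚ) ^ (n + k')) * C ((-1 : ℚ) ^ (n + k')) = 1 := by
      rw [← map_mul, ← pow_add]
      have : Even ((n + k') + (n + k')) := ⟨n + k', rfl⟩
      rw [this.neg_one_pow, map_one]
    simp only [map_neg, map_mul]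
    linear_combination (-(C (sc (k' + 1) (n + 1)) * sU ^ (n + 1))) * hA


lemma sc_extract (k' n : ℕ) : sc (k' + 1) (n + 1) =
    (-1 : ℚ) ^ (n + k') * (coeff (n + 1) ((X : PowerSeries ℚ) ^ (k' + 1)) -
      ∑ m ∈ Finset.Ico 1 (n + 1),
        (-1 : ℚ) ^ (m + k' + 1) * sc (k' + 1) m * coeff (n + 1) (sU ^ m)) := by
  have h := congrArg (coeff (n + 1)) (closed_form k' n)
  have hL : coeff (n + 1) (sU ^ (n + 1) * sF (k' + 1) (n + 1)) = sc (k' + 1) (n + 1) := by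
    have h0 : sU ^ (n + 1) * sF (k' + 1) (n + 1)
        = X ^ (n + 1) * (sE ^ (n + 1) * sF (k' + 1) (n + 1)) := by
      rw [sU_eq, mul_pow, mul_assoc]
    rw [h0]
    have := coeff_X_pow_mul (sE ^ (n + 1) * sF (k' + 1) (n + 1)) (n + 1) 0
    rw [zero_add] at this
    rw [this, coeff_zero_eq_constantCoeff, map_mul, map_pow, constantCoeff_sE, one_pow, one_mul]
    simp [sF, sc, ← coeff_zero_eq_constantCoeff]
  rw [hL] at h
  rw [h, coeff_C_mul, map_sub, map_sum]
  have hterm : ∀ m ∈ Finset.Ico 1 (n + 1),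
      coeff (n + 1) (C ((-1) ^ (m + k' + 1) * sc (k' + 1) m) * sU ^ m)
        = (-1 : ℚ) ^ (m + k' + 1) * sc (k' + 1) m * coeff (n + 1) (sU ^ m) := by
    intro m _
    rw [coeff_C_mul]
  rw [Finset.sum_congr rfl hterm]

lemma sc_zero (k' : ℕ) : ∀ n, n + 1 < k' + 1 → sc (k' + 1) (n + 1) = 0 := by
  intro n
  induction n using Nat.strong_induction_on with
  | _ n ih =>
    intro hn
    rw [sc_extract]
    have h1 : coeff (n + 1) ((X : PowerSeries ℚ) ^ (k' + 1)) = 0 := by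
      rw [coeff_X_pow, if_neg (by omega)]
    have h2 : ∀ m ∈ Finset.Ico 1 (n + 1),
        (-1 : ℚ) ^ (m + k' + 1) * sc (k' + 1) m * coeff (n + 1) (sU ^ m) = 0 := by
      intro m hm
      rw [Finset.mem_Ico] at hm
      obtain ⟨m', rfl⟩ : ∃ m', m = m' + 1 := ⟨m - 1, by omega⟩
      rw [ih m' (by omega) (by omega), mul_zero, zero_mul]
    rw [h1, Finset.sum_eq_zero h2, sub_zero, mul_zero]

lemma sc_formula (k' : ℕ) : ∀ q, sc (k' + 1) (q + (k' + 1)) = sS (k' + 1) q := by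
  intro q
  induction q using Nat.strong_induction_on with
  | _ q ih =>
    have hq : q + (k' + 1) = (q + k') + 1 := by omega
    rw [hq, sc_extract]
    have hsign : ((-1 : ℚ)) ^ (q + k' + k') = (-1 : ℚ) ^ q := by
      have : q + k' + k' = q + 2 * k' := by omega
      rw [this, pow_add, pow_mul, neg_one_sq, one_pow, mul_one]
    -- split the sum
    have hsplit : ∑ m ∈ Finset.Ico 1 (q + k' + 1),
        (-1 : ℚ) ^ (m + k' + 1) * sc (k' + 1) m * coeff (q + k' + 1) (sU ^ m)
        = ∑ p ∈ Finset.range q,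
            (-1 : ℚ) ^ p * sS (k' + 1) p * coeff (q + k' + 1) (sU ^ (p + (k' + 1))) := by
      rw [← Finset.sum_Ico_consecutive _ (by omega : 1 ≤ k' + 1) (by omega : k' + 1 ≤ q + k' + 1)]
      have hz : ∑ m ∈ Finset.Ico 1 (k' + 1),
          (-1 : ℚ) ^ (m + k' + 1) * sc (k' + 1) m * coeff (q + k' + 1) (sU ^ m) = 0 := by
        apply Finset.sum_eq_zero
        intro m hm
        rw [Finset.mem_Ico] at hm
        obtain ⟨m', rfl⟩ : ∃ m', m = m' + 1 := ⟨m - 1, by omega⟩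
        rw [sc_zero k' m' (by omega), mul_zero, zero_mul]
      rw [hz, zero_add, Finset.sum_Ico_eq_sum_range]
      have hq2 : q + k' + 1 - (k' + 1) = q := by omega
      rw [hq2]
      refine Finset.sum_congr rfl fun p hp => ?_
      have hp' : p < q := Finset.mem_range.mp hp
      have e1 : k' + 1 + p = p + (k' + 1) := by omega
      rw [e1, ih p hp']
      have e2 : ((-1 : ℚ)) ^ (p + (k' + 1) + k' + 1) = (-1 : ℚ) ^ p := by
        have : p + (k' + 1) + k' + 1 = p + 2 * (k' + 1) := by omega
        rw [this, pow_add, pow_mul, neg_one_sq, one_pow, mul_one]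
      rw [e2]
    rw [hsplit]
    -- use the analytic identity
    have hfin := fin_all (k' + 1) q
    have hco : coeff (q + k' + 1) ((X : PowerSeries ℚ) ^ (k' + 1) - sT (k' + 1) q) = 0 := by
      obtain ⟨g, hg⟩ := hfin
      rw [hg]
      exact (X_pow_dvd_iff.mp (Dvd.intro _ rfl)) _ (by omega)
    rw [map_sub, sub_eq_zero] at hco
    have hT : coeff (q + k' + 1) (sT (k' + 1) q)
        = (∑ p ∈ Finset.range q,
            (-1 : ℚ) ^ p * sS (k' + 1) p * coeff (q + k' + 1) (sU ^ (p + (k' + 1))))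
          + (-1 : ℚ) ^ q * sS (k' + 1) q := by
      rw [sT, map_sum, Finset.sum_range_succ]
      have hlast : coeff (q + k' + 1) (C ((-1) ^ q * sS (k' + 1) q) * sU ^ (q + (k' + 1)))
          = (-1 : ℚ) ^ q * sS (k' + 1) q := by
        rw [coeff_C_mul]
        have : q + k' + 1 = q + (k' + 1) := by omega
        rw [this, coeff_sU_pow_self, mul_one]
      rw [hlast]
      congr 1
      refine Finset.sum_congr rfl fun p _ => ?_
      rw [coeff_C_mul, mul_assoc]
    rw [hco, hT]
    have hqq : ((-1 : ℚ)) ^ q * (-1 : ℚ) ^ q = 1 := by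
      rw [← pow_add]
      have he : Even (q + q) := ⟨q, rfl⟩
      exact he.neg_one_pow
    rw [hsign]
    calc ((-1 : ℚ)) ^ q * ((∑ p ∈ Finset.range q,
            (-1 : ℚ) ^ p * sS (k' + 1) p * coeff (q + k' + 1) (sU ^ (p + (k' + 1))))
          + (-1 : ℚ) ^ q * sS (k' + 1) q
          - ∑ p ∈ Finset.range q,
            (-1 : ℚ) ^ p * sS (k' + 1) p * coeff (q + k' + 1) (sU ^ (p + (k' + 1))))
        = ((-1 : ℚ) ^ q * (-1 : ℚ) ^ q) * sS (k' + 1) q := by ring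
      _ = sS (k' + 1) q := by rw [hqq, one_mul]

lemma tuple_sum (f : ℕ → ℚ) : ∀ k q, (∑ ℓ ∈ Finset.Nat.antidiagonalTuple k q,
    ∏ r : Fin k, f (ℓ r)) = coeff q ((PowerSeries.mk f) ^ k) := by
  intro k
  induction k with
  | zero =>
    intro q
    cases q with
    | zero => simp [Finset.Nat.antidiagonalTuple_zero_zero]
    | succ q => simp [Finset.Nat.antidiagonalTuple_zero_succ, coeff_one]
  | succ k ih =>
    intro q
    rw [pow_succ, mul_comm ((PowerSeries.mk f) ^ k) (PowerSeries.mk f), coeff_mul]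
    have : ∀ ab ∈ Finset.HasAntidiagonal.antidiagonal q,
        coeff ab.1 (PowerSeries.mk f) * coeff ab.2 ((PowerSeries.mk f) ^ k)
          = f ab.1 * ∑ ℓ ∈ Finset.Nat.antidiagonalTuple k ab.2, ∏ r : Fin k, f (ℓ r) := by
      intro ab _
      rw [coeff_mk, ih]
    rw [Finset.sum_congr rfl this]
    simp only [Finset.mul_sum]
    rw [Finset.sum_sigma']
    refine Finset.sum_nbij'
      (fun ℓ => (⟨(ℓ 0, ∑ r : Fin k, ℓ r.succ), Fin.tail ℓ⟩ :
        (_ : ℕ × ℕ) × (Fin k → ℕ)))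
      (fun x => Fin.cons x.1.1 x.2) ?_ ?_ ?_ ?_ ?_
    · intro ℓ hℓ
      rw [Finset.Nat.mem_antidiagonalTuple] at hℓ
      refine Finset.mem_sigma.mpr ⟨Finset.HasAntidiagonal.mem_antidiagonal.mpr ?_, ?_⟩
      · show ℓ 0 + ∑ r : Fin k, ℓ r.succ = q
        rw [← hℓ, Fin.sum_univ_succ]
      · show Fin.tail ℓ ∈ _
        rw [Finset.Nat.mem_antidiagonalTuple]
        rfl
    · intro x hx
      simp only [Finset.mem_sigma, Finset.HasAntidiagonal.mem_antidiagonal,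
        Finset.Nat.mem_antidiagonalTuple] at hx
      rw [Finset.Nat.mem_antidiagonalTuple, Fin.sum_univ_succ, Fin.cons_zero]
      simp only [Fin.cons_succ]
      rw [hx.2, hx.1]
    · intro ℓ _
      exact Fin.cons_self_tail ℓ
    · intro x hx
      simp only [Finset.mem_sigma, Finset.HasAntidiagonal.mem_antidiagonal,
        Finset.Nat.mem_antidiagonalTuple] at hx
      simp only [Fin.cons_zero, Fin.cons_succ, Fin.tail_cons]
      rw [hx.2]
    · intro ℓ _
      show (∏ r : Fin (k + 1), f (ℓ r)) = f (ℓ 0) * ∏ r : Fin k, f (Fin.tail ℓ r)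
      rw [Fin.prod_univ_succ]
      rfl

/-- for i ≥ 1 and q ≥ 0,
d_{(q+i,0,i)} = ∑_{ℓ₁+⋯+ℓ_i=q} 1/((ℓ₁+1)⋯(ℓ_i+1)). -/
theorem stmt10 (i : ℕ) (hi : 1 ≤ i) (q : ℕ) :
    suzukiD i (q + i) 0 =
      ∑ ℓ ∈ Finset.Nat.antidiagonalTuple i q, ∏ r : Fin i, (1 : ℚ) / (ℓ r + 1) := by
  obtain ⟨k', rfl⟩ : ∃ k', i = k' + 1 := ⟨i - 1, by omega⟩
  have h1 : suzukiD (k' + 1) (q + (k' + 1)) 0 = sc (k' + 1) (q + (k' + 1)) := rfl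
  rw [h1, sc_formula k' q, sS]
  rw [tuple_sum (fun n => (1 : ℚ) / (n + 1)) (k' + 1) q]
  rfl
end SuzukiAux
end

section
/- For i ≥ 1 and i ≤ k ≤ i+j, d_{(i,j,k)} = (-1)^j j! ∑_{ℓ₁+⋯+ℓ_i = i+j-k} ((-1)^{ℓ₁}B_{ℓ₁}/ℓ₁!)⋯((-1)^{ℓ_i}B_{ℓ_i}/ℓ_i!). -/
open Finset PowerSeries

lemma suzukiD_conv (g : ℕ → ℚ) (i n : ℕ) :
    ∑ ℓ ∈ Finset.Nat.antidiagonalTuple (i+1) n, ∏ r, g (ℓ r)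
    = ∑ m ∈ Finset.range (n+1), g m *
        ∑ ℓ ∈ Finset.Nat.antidiagonalTuple i (n-m), ∏ r, g (ℓ r) := by
  simp_rw [Finset.mul_sum]
  rw [Finset.sum_sigma']
  apply Finset.sum_nbij' (fun ℓ => (⟨ℓ 0, Fin.tail ℓ⟩ : Σ m : ℕ, Fin i → ℕ))
      (fun p => Fin.cons p.1 p.2)
  · intro ℓ hℓ
    rw [Finset.Nat.mem_antidiagonalTuple] at hℓ
    rw [Fin.sum_univ_succ] at hℓ
    simp only [Finset.mem_sigma, Finset.mem_range, Finset.Nat.mem_antidiagonalTuple]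
    constructor
    · omega
    · simp only [Fin.tail]; omega
  · intro p hp
    rw [Finset.mem_sigma, Finset.mem_range, Finset.Nat.mem_antidiagonalTuple] at hp
    rw [Finset.Nat.mem_antidiagonalTuple, Fin.sum_univ_succ]
    simp only [Fin.cons_zero, Fin.cons_succ]
    omega
  · intro ℓ _; exact Fin.cons_self_tail ℓ
  · intro p _; simp
  · intro ℓ _
    rw [Fin.prod_univ_succ]
    rfl

lemma suzukiD_vanish (k : ℕ) : ∀ i j : ℕ, 1 ≤ i → i + j < k → suzukiD k i j = 0 := by
  intro i
  induction i with
  | zero => intro j h; omega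
  | succ i ih =>
    intro j _ hjk
    match i with
    | 0 => simp only [suzukiD]; rw [if_pos (by omega)]
    | i + 1 =>
      simp only [suzukiD]
      rw [Finset.sum_eq_zero, mul_zero]
      intro m hm
      rw [Finset.mem_range] at hm
      rw [ih (j + 1 - m) (by omega) (by omega), mul_zero]

/-- for i ≥ 1 and i ≤ k ≤ i+j,
d_{(i,j,k)} = (-1)^j j! ∑_{ℓ₁+⋯+ℓ_i=i+j-k} ∏_r (-1)^{ℓ_r} B_{ℓ_r}/ℓ_r!. -/
theorem stmt11 (i j k : ℕ) (hi : 1 ≤ i) (hik : i ≤ k) (hk : k ≤ i + j) :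
    suzukiD k i j =
      (-1) ^ j * j.factorial *
        ∑ ℓ ∈ Finset.Nat.antidiagonalTuple i (i + j - k),
          ∏ r : Fin i, ((-1) ^ (ℓ r) * bernoulli (ℓ r) / (ℓ r).factorial) := by
  induction i generalizing j with
  | zero => omega
  | succ i ih =>
    match i, ih with
    | 0, _ =>
      simp only [suzukiD]
      rw [if_neg (by omega)]
      rw [show 1 + j - k = j + 1 - k by omega, Finset.Nat.antidiagonalTuple_one]
      simp
    | i + 1, ih =>
      set g : ℕ → ℚ := fun m => (-1) ^ m * bernoulli m / m.factorial with hg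
      have hn : i + 2 + j - k ≤ j := by omega
      set n := i + 2 + j - k with hndef
      simp only [suzukiD]
      rw [← Finset.sum_subset (Finset.range_subset_range.2 (by omega : n + 1 ≤ j + 1))]
      · rw [suzukiD_conv g (i+1) n, Finset.mul_sum, Finset.mul_sum]
        apply Finset.sum_congr rfl
        intro m hm
        rw [Finset.mem_range] at hm
        rw [ih (j + 1 - m) (by omega) (by omega) (by omega)]
        rw [show i + 1 + (j + 1 - m) - k = n - m by omega]
        have hem : ((-1 : ℚ)) ^ m * (-1) ^ m = 1 := by
          rw [← pow_add, ← two_mul, pow_mul]; norm_num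
        have h1 : ((-1 : ℚ)) ^ (j + 1 - m) * (-1) ^ m = (-1) ^ (j + 1) := by
          rw [← pow_add]; congr 1; omega
        have hs : ((-1 : ℚ)) ^ (j + 1 - m) = (-1) ^ (j + 1) * (-1) ^ m := by
          calc ((-1 : ℚ)) ^ (j + 1 - m)
              = (-1) ^ (j + 1 - m) * ((-1) ^ m * (-1) ^ m) := by rw [hem, mul_one]
            _ = ((-1) ^ (j + 1 - m) * (-1) ^ m) * (-1) ^ m := by ring
            _ = (-1) ^ (j + 1) * (-1) ^ m := by rw [h1]
        have h2 : (((j+1).choose m : ℚ)) * m.factorial * (j+1-m).factorial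
            = (j+1).factorial := by
          exact_mod_cast Nat.choose_mul_factorial_mul_factorial (by omega : m ≤ j + 1)
        have hm0 : (m.factorial : ℚ) ≠ 0 := by positivity
        have hj0 : ((j : ℚ) + 1) ≠ 0 := by positivity
        rw [Nat.factorial_succ] at h2
        rw [hs]
        push_cast at h2 ⊢
        simp only [hg]
        set T := ∑ ℓ ∈ Finset.Nat.antidiagonalTuple (i+1) (n-m),
          ∏ r : Fin (i+1), ((-1 : ℚ) ^ (ℓ r) * bernoulli (ℓ r) / (ℓ r).factorial)
        field_simp
        linear_combination (bernoulli m * T * (-1) ^ j) * h2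
      · intro m hm hm2
        rw [Finset.mem_range] at hm
        rw [Finset.mem_range, not_lt] at hm2
        rw [suzukiD_vanish k (i+1) (j+1-m) (by omega) (by omega), mul_zero]
end

section
/- For 1 ≤ k < i and j ≥ 0, d_{(i,j,k)} = ∑_{p=0}^{j} (-1)^p p! S(j,p) ∑_{ℓ₁+⋯+ℓ_k = p+i-k} 1/((ℓ₁+1)⋯(ℓ_k+1)), where S(j,p) is the Stirling number of the second kind. -/
open Finset PowerSeries

/-- Stirling numbers of the second kind S(j,p), read off from their
exponential generating function (e^t-1)^p/p! = ∑_{j} S(j,p) t^j/j!. -/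
noncomputable def stirling2 (j p : ℕ) : ℚ :=
  (j.factorial : ℚ) / p.factorial * PowerSeries.coeff j ((PowerSeries.exp ℚ - 1) ^ p)

set_option maxHeartbeats 1000000

noncomputable def Tk (k n : ℕ) : ℚ :=
  ∑ ℓ ∈ Finset.Nat.antidiagonalTuple k n, ∏ r : Fin k, (1 : ℚ) / (ℓ r + 1)

lemma Tk_one (n : ℕ) : Tk 1 n = 1 / (n + 1) := by
  simp [Tk, Finset.Nat.antidiagonalTuple_one]

lemma Tk_succ (k n : ℕ) :
    Tk (k + 1) n = ∑ ab ∈ antidiagonal n, Tk 1 ab.1 * Tk k ab.2 := by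
  simp only [Tk_one]
  rw [eq_comm]
  calc ∑ ab ∈ antidiagonal n, (1 / ((ab.1 : ℚ) + 1)) * Tk k ab.2
      = ∑ ab ∈ antidiagonal n, ∑ x ∈ Finset.Nat.antidiagonalTuple k ab.2,
          (1 / ((ab.1 : ℚ) + 1) * ∏ r : Fin k, (1 : ℚ) / (x r + 1)) := by
        simp [Tk, mul_sum]
    _ = ∑ p ∈ (antidiagonal n).sigma (fun ab => Finset.Nat.antidiagonalTuple k ab.2),
          (1 / ((p.1.1 : ℚ) + 1) * ∏ r : Fin k, (1 : ℚ) / (p.2 r + 1)) :=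
        Finset.sum_sigma' _ _ _
    _ = ∑ ℓ ∈ Finset.Nat.antidiagonalTuple (k + 1) n, ∏ r : Fin (k + 1), (1 : ℚ) / (ℓ r + 1) := by
        refine Finset.sum_nbij' (fun x => Fin.cons x.1.1 x.2)
          (fun ℓ => ⟨(ℓ 0, ∑ r : Fin k, (Fin.tail ℓ) r), Fin.tail ℓ⟩) ?_ ?_ ?_ ?_ ?_
        · intro x hx
          simp only [Finset.mem_sigma, Finset.Nat.mem_antidiagonalTuple,
            Finset.HasAntidiagonal.mem_antidiagonal] at hx
          rw [Finset.Nat.mem_antidiagonalTuple, Fin.sum_cons, hx.2, hx.1]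
        · intro ℓ hℓ
          rw [Finset.Nat.mem_antidiagonalTuple] at hℓ
          simp only [Finset.mem_sigma, Finset.Nat.mem_antidiagonalTuple,
            Finset.HasAntidiagonal.mem_antidiagonal]
          constructor
          · rw [← hℓ, Fin.sum_univ_succ]
            rfl
          · trivial
        · intro x hx
          simp only [Finset.mem_sigma, Finset.Nat.mem_antidiagonalTuple,
            Finset.HasAntidiagonal.mem_antidiagonal] at hx
          obtain ⟨⟨a, b⟩, t⟩ := x
          obtain ⟨h1, h2⟩ := hx
          simp only [Fin.cons_zero, Fin.tail_cons]
          simp [h2]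
        · intro ℓ hℓ
          exact Fin.cons_self_tail ℓ
        · intro x hx
          rw [Fin.prod_univ_succ]
          simp [Fin.cons_zero, Fin.cons_succ]

lemma X_dvd_u : (X : ℚ⟦X⟧) ∣ (1 - exp ℚ) := by
  rw [PowerSeries.X_dvd_iff]
  simp [constantCoeff_exp]

lemma dX_exp : d⁄dX ℚ (exp ℚ) = exp ℚ := by
  ext n
  rw [PowerSeries.coeff_derivative]
  simp only [coeff_exp, Algebra.algebraMap_self, RingHom.id_apply]
  rw [Nat.factorial_succ]
  push_cast
  have h1 : ((n : ℚ) + 1) ≠ 0 := by positivity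
  have h2 : ((n.factorial : ℚ)) ≠ 0 := Nat.cast_ne_zero.2 n.factorial_ne_zero
  field_simp

lemma dvd_of_deriv (g : ℚ⟦X⟧) (h0 : constantCoeff g = 0) (m : ℕ)
    (hd : (X : ℚ⟦X⟧) ^ m ∣ d⁄dX ℚ g) : (X : ℚ⟦X⟧) ^ (m + 1) ∣ g := by
  rw [PowerSeries.X_pow_dvd_iff] at hd ⊢
  intro j hj
  match j with
  | 0 => simpa using h0
  | j + 1 =>
    have := hd j (by omega)
    rw [PowerSeries.coeff_derivative] at this
    rcases mul_eq_zero.1 this with h | h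
    · exact h
    · exact absurd h (by positivity)

lemma log_dvd (N : ℕ) :
    (X : ℚ⟦X⟧) ^ (N + 2) ∣ (∑ n ∈ range (N + 1), Tk 1 n • (1 - exp ℚ) ^ (n + 1) + X) := by
  apply dvd_of_deriv
  · simp only [map_add, map_sum, constantCoeff_X]
    rw [add_zero]
    apply Finset.sum_eq_zero
    intro n _
    rw [← PowerSeries.coeff_zero_eq_constantCoeff_apply, PowerSeries.coeff_smul,
      PowerSeries.coeff_zero_eq_constantCoeff_apply, map_pow]
    simp [constantCoeff_exp]
  · have hderiv : d⁄dX ℚ (∑ n ∈ range (N + 1), Tk 1 n • (1 - exp ℚ) ^ (n + 1) + X)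
        = (1 - exp ℚ) ^ (N + 1) := by
      rw [map_add, map_sum]
      have hdu : d⁄dX ℚ (1 - exp ℚ) = -exp ℚ := by
        rw [map_sub, dX_exp]
        simp
      have hterm : ∀ n, d⁄dX ℚ (Tk 1 n • (1 - exp ℚ) ^ (n + 1))
          = (1 - exp ℚ) ^ n * (-exp ℚ) := by
        intro n
        rw [Derivation.map_smul, Derivation.leibniz_pow, hdu]
        simp only [Nat.add_sub_cancel, smul_eq_mul]
        rw [← Nat.cast_smul_eq_nsmul ℚ, smul_smul, Tk_one]
        push_cast
        rw [one_div, inv_mul_cancel₀ (by positivity), one_smul]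
      calc (∑ n ∈ range (N + 1), d⁄dX ℚ (Tk 1 n • (1 - exp ℚ) ^ (n + 1))) + d⁄dX ℚ X
          = (∑ n ∈ range (N + 1), (1 - exp ℚ) ^ n) * (-exp ℚ) + 1 := by
            rw [Finset.sum_congr rfl (fun n _ => hterm n), ← Finset.sum_mul]
            simp
        _ = (1 - exp ℚ) ^ (N + 1) := by
            have hg := geom_sum_mul (1 - exp ℚ) (N + 1)
            have : (1 - exp ℚ) - 1 = -exp ℚ := by ring
            rw [this] at hg
            rw [hg]
            ring
    rw [hderiv]
    exact pow_dvd_pow_of_dvd X_dvd_u (N + 1)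
lemma dvd_smul_ps (q : ℚ) {f g : ℚ⟦X⟧} (h : f ∣ g) : f ∣ q • g := by
  rw [smul_eq_C_mul]; exact h.mul_left _

lemma X_pow_dvd_u_pow {m e : ℕ} (h : m ≤ e) : (X : ℚ⟦X⟧) ^ m ∣ (1 - exp ℚ) ^ e :=
  (pow_dvd_pow X h).trans (pow_dvd_pow_of_dvd X_dvd_u e)

lemma main_dvd (k : ℕ) (hk : 1 ≤ k) (N : ℕ) :
    (X : ℚ⟦X⟧) ^ (N + k + 1) ∣
      (∑ n ∈ range (N + 1), Tk k n • (1 - exp ℚ) ^ (n + k) - (-X) ^ k) := by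
  induction k with
  | zero => exact absurd hk (by omega)
  | succ k ih =>
    rcases Nat.eq_zero_or_pos k with hk0 | hk1
    · subst hk0
      simpa [sub_neg_eq_add] using log_dvd N
    · set u : ℚ⟦X⟧ := 1 - exp ℚ with hu
      set A : ℚ⟦X⟧ := ∑ n ∈ range (N + 1), Tk k n • u ^ (n + k) with hA
      set B : ℚ⟦X⟧ := ∑ n ∈ range (N + 1), Tk 1 n • u ^ (n + 1) with hB
      have hXB : (X : ℚ⟦X⟧) ∣ B := by
        apply Finset.dvd_sum
        intro n _
        exact dvd_smul_ps _ (by simpa using X_pow_dvd_u_pow (show 1 ≤ n + 1 by omega))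
      have hBA : B * A = ∑ p ∈ range (N + 1) ×ˢ range (N + 1),
          (Tk 1 p.1 * Tk k p.2) • u ^ (p.1 + p.2 + (k + 1)) := by
        rw [Finset.sum_mul_sum, ← Finset.sum_product']
        apply Finset.sum_congr rfl
        intro p _
        rw [smul_mul_assoc, mul_smul_comm, smul_smul, ← pow_add,
          show p.1 + 1 + (p.2 + k) = p.1 + p.2 + (k + 1) from by omega]
      have hGU : (∑ n ∈ range (N + 1), Tk (k + 1) n • u ^ (n + (k + 1)))
          = ∑ p ∈ (range (N + 1) ×ˢ range (N + 1)).filter (fun p => p.1 + p.2 ≤ N),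
              (Tk 1 p.1 * Tk k p.2) • u ^ (p.1 + p.2 + (k + 1)) := by
        have h1 : ∀ n ∈ range (N + 1), Tk (k + 1) n • u ^ (n + (k + 1))
            = ∑ ab ∈ antidiagonal n, (Tk 1 ab.1 * Tk k ab.2) • u ^ (ab.1 + ab.2 + (k + 1)) := by
          intro n _
          rw [Tk_succ, Finset.sum_smul]
          apply Finset.sum_congr rfl
          intro ab hab
          rw [Finset.HasAntidiagonal.mem_antidiagonal] at hab
          rw [hab]
        rw [Finset.sum_congr rfl h1, ← Finset.sum_biUnion]
        · apply Finset.sum_congr _ (fun _ _ => rfl)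
          ext p
          simp only [Finset.mem_biUnion, Finset.mem_range, Finset.HasAntidiagonal.mem_antidiagonal,
            Finset.mem_filter, Finset.mem_product]
          constructor
          · rintro ⟨n, hn, rfl⟩
            omega
          · rintro ⟨⟨h1, h2⟩, h3⟩
            exact ⟨p.1 + p.2, by omega, rfl⟩
        · intro a _ b _ hab
          simp only [Function.onFun]
          rw [Finset.disjoint_left]
          intro p hpa hpb
          rw [Finset.HasAntidiagonal.mem_antidiagonal] at hpa hpb
          exact hab (hpa.symm.trans hpb)
      rw [show (∑ n ∈ range (N + 1), Tk (k + 1) n • u ^ (n + (k + 1))) - (-X) ^ (k + 1)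
          = ((∑ n ∈ range (N + 1), Tk (k + 1) n • u ^ (n + (k + 1))) - B * A)
            + (B * (A - (-X) ^ k) + (B - (-X)) * (-X) ^ k) by ring]
      apply dvd_add
      · rw [hGU, hBA, ← neg_sub, ← Finset.sum_sdiff_eq_sub (Finset.filter_subset _ _), dvd_neg]
        apply Finset.dvd_sum
        intro p hp
        simp only [Finset.mem_sdiff, Finset.mem_filter, Finset.mem_product,
          Finset.mem_range] at hp
        apply dvd_smul_ps
        apply X_pow_dvd_u_pow
        omega
      · apply dvd_add
        · rw [show N + (k + 1) + 1 = 1 + (N + k + 1) by ring, pow_add, pow_one]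
          exact mul_dvd_mul hXB (ih hk1)
        · rw [show N + (k + 1) + 1 = (N + 2) + k by ring, pow_add]
          apply mul_dvd_mul
          · simpa [sub_neg_eq_add] using log_dvd N
          · calc (X : ℚ⟦X⟧) ^ k ∣ X ^ k := dvd_rfl
              _ ∣ (-X) ^ k := by
                  rcases Nat.even_or_odd k with h | h
                  · rw [h.neg_pow]
                  · rw [h.neg_pow]; exact dvd_neg.2 dvd_rfl
noncomputable def cT (k : ℕ) (z : ℤ) : ℚ := if z < 0 then 0 else Tk k z.toNat

lemma coeff_u_pow_eq_zero {J p : ℕ} (h : J < p) : coeff J ((1 - exp ℚ) ^ p) = 0 :=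
  PowerSeries.X_pow_dvd_iff.1 (X_pow_dvd_u_pow le_rfl) J h

lemma rhs_eq_coeff (j : ℕ) (c : ℕ → ℚ) :
    ∑ p ∈ range (j + 1), (-1 : ℚ) ^ p * p.factorial * stirling2 j p * c p
      = (j.factorial : ℚ) * coeff j (∑ p ∈ range (j + 1), c p • (1 - exp ℚ) ^ p) := by
  rw [map_sum, Finset.mul_sum]
  apply Finset.sum_congr rfl
  intro p _
  rw [PowerSeries.coeff_smul, stirling2]
  have h1 : (1 - exp ℚ) ^ p = ((-1 : ℚ) ^ p) • (exp ℚ - 1) ^ p := by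
    rw [← smul_pow]
    congr 1
    rw [neg_one_smul]
    ring
  rw [h1, PowerSeries.coeff_smul]
  have h2 : (p.factorial : ℚ) ≠ 0 := Nat.cast_ne_zero.2 p.factorial_ne_zero
  field_simp
  ring

lemma gen_base (k : ℕ) (hk : 1 ≤ k) (j : ℕ) :
    suzukiD k 1 j = ∑ p ∈ range (j + 1),
      (-1 : ℚ) ^ p * p.factorial * stirling2 j p * cT k ((p : ℤ) + 1 - k) := by
  rw [rhs_eq_coeff j (fun p => cT k ((p : ℤ) + 1 - k))]
  by_cases hcase : 1 + j < k
  · rw [suzukiD, if_pos hcase]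
    have : (∑ p ∈ range (j + 1), cT k ((p : ℤ) + 1 - k) • (1 - exp ℚ) ^ p) = 0 := by
      apply Finset.sum_eq_zero
      intro p hp
      rw [Finset.mem_range] at hp
      simp only [cT]; rw [if_pos (by omega), zero_smul]
    rw [this]
    simp
  · obtain ⟨k', rfl⟩ : ∃ k', k = k' + 1 := ⟨k - 1, by omega⟩
    have hk' : k' ≤ j := by omega
    rw [suzukiD, if_neg hcase]
    set u : ℚ⟦X⟧ := 1 - exp ℚ with hu
    set P : ℚ⟦X⟧ := ∑ p ∈ range (j + 1), cT (k' + 1) ((p : ℤ) + 1 - ((k' + 1 : ℕ) : ℤ)) • u ^ p with hP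
    have hPeq : P = ∑ n ∈ range (j - k' + 1), Tk (k' + 1) n • u ^ (n + k') := by
      rw [hP, range_eq_Ico, ← Finset.sum_Ico_consecutive _ (Nat.zero_le k')
        (by omega : k' ≤ j + 1)]
      have h1 : (∑ p ∈ Ico 0 k', cT (k' + 1) ((p : ℤ) + 1 - ((k' + 1 : ℕ) : ℤ)) • u ^ p) = 0 := by
        apply Finset.sum_eq_zero
        intro p hp
        rw [Finset.mem_Ico] at hp
        simp only [cT]; rw [if_pos (by omega), zero_smul]
      rw [h1, zero_add, Finset.sum_Ico_eq_sum_range]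
      apply Finset.sum_congr (by rw [show j + 1 - k' = j - k' + 1 from by omega, range_eq_Ico])
      intro n _
      have h2 : ((k' + n : ℕ) : ℤ) + 1 - ((k' + 1 : ℕ) : ℤ) = (n : ℤ) := by push_cast; ring
      rw [h2]
      simp only [cT]
      rw [if_neg (by omega), Int.toNat_natCast, show k' + n = n + k' from by omega]
    have hQu : ((-1 : ℚ⟦X⟧) ^ k' * X ^ k' * bernoulliPowerSeries ℚ) * u = (-X) ^ (k' + 1) := by
      have h2 : bernoulliPowerSeries ℚ * u = -X := by
        rw [hu, show (1 - exp ℚ) = -(exp ℚ - 1) from by ring, mul_neg,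
          bernoulliPowerSeries_mul_exp_sub_one]
      calc ((-1 : ℚ⟦X⟧) ^ k' * X ^ k' * bernoulliPowerSeries ℚ) * u
          = (-1 : ℚ⟦X⟧) ^ k' * X ^ k' * (bernoulliPowerSeries ℚ * u) := by ring
        _ = (-1 : ℚ⟦X⟧) ^ k' * X ^ k' * (-X) := by rw [h2]
        _ = (-X) ^ (k' + 1) := by rw [neg_pow, neg_pow]; ring
    set Q : ℚ⟦X⟧ := (-1 : ℚ⟦X⟧) ^ k' * X ^ k' * bernoulliPowerSeries ℚ with hQ
    have hdvd : (X : ℚ⟦X⟧) ^ (j + 2) ∣ (P - Q) * u := by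
      have hm := main_dvd (k' + 1) (by omega) (j - k')
      rw [show j - k' + (k' + 1) + 1 = j + 2 from by omega] at hm
      have hGP : (∑ n ∈ range (j - k' + 1), Tk (k' + 1) n • (1 - exp ℚ) ^ (n + (k' + 1)))
          = P * u := by
        rw [hPeq, Finset.sum_mul]
        apply Finset.sum_congr rfl
        intro n _
        rw [smul_mul_assoc, ← pow_succ, ← hu, show n + (k' + 1) = n + k' + 1 from by omega]
      rw [hGP] at hm
      rw [sub_mul, hQu]
      exact hm
    obtain ⟨V, hV⟩ := X_dvd_u
    have hVc : constantCoeff V = -1 := by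
      have h3 : coeff 1 (1 - exp ℚ) = coeff 0 V := by
        rw [← hu] at hV ⊢
        rw [hV, PowerSeries.coeff_succ_X_mul]
      rw [← PowerSeries.coeff_zero_eq_constantCoeff_apply, ← h3]
      simp [coeff_exp, PowerSeries.coeff_one]
    have hVu : IsUnit V := PowerSeries.isUnit_iff_constantCoeff.2 (by rw [hVc]; exact isUnit_one.neg)
    obtain ⟨W, hW⟩ := hdvd
    have hcancel : (P - Q) * V = X ^ (j + 1) * W := by
      apply mul_left_cancel₀ (PowerSeries.X_ne_zero (R := ℚ))
      calc X * ((P - Q) * V) = (P - Q) * (X * V) := by ring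
        _ = X ^ (j + 2) * W := by rw [← hV]; exact hW
        _ = X * (X ^ (j + 1) * W) := by rw [pow_succ]; ring
    have hdvd2 : (X : ℚ⟦X⟧) ^ (j + 1) ∣ (P - Q) := by
      rw [← hVu.dvd_mul_right]
      exact ⟨W, hcancel⟩
    have hPQj : coeff j P = coeff j Q :=
      sub_eq_zero.1 (by simpa using PowerSeries.X_pow_dvd_iff.1 hdvd2 j (lt_add_one j))
    rw [hPQj]
    have hQcoeff : coeff j Q = (-1 : ℚ) ^ k' * (bernoulli (j - k') / (j - k').factorial) := by
      have h4 : Q = ((-1 : ℚ) ^ k') • (X ^ k' * bernoulliPowerSeries ℚ) := by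
        rw [hQ, smul_eq_C_mul, map_pow, map_neg, map_one, mul_assoc]
      rw [h4, PowerSeries.coeff_smul, show j = (j - k') + k' from by omega,
        PowerSeries.coeff_X_pow_mul]
      simp [bernoulliPowerSeries, coeff_mk]
    rw [hQcoeff, show j + 1 - (k' + 1) = j - k' from by omega]
    have h5 : (-1 : ℚ) ^ j = (-1) ^ (j - k') * (-1) ^ k' := by
      rw [← pow_add, Nat.sub_add_cancel hk']
    have h6 : ((-1 : ℚ)) ^ (j - k') * (-1) ^ (j - k') = 1 := by
      rw [← pow_add]
      exact Even.neg_one_pow ⟨j - k', rfl⟩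
    rw [h5]
    field_simp
    linear_combination (bernoulli (j - k')) * h6
lemma gen (k : ℕ) (hk : 1 ≤ k) (i : ℕ) (j : ℕ) :
    suzukiD k (i + 1) j = ∑ p ∈ range (j + 1),
      (-1 : ℚ) ^ p * p.factorial * stirling2 j p * cT k ((p : ℤ) + (i + 1) - k) := by
  induction i generalizing j with
  | zero =>
    rw [gen_base k hk j]
    apply Finset.sum_congr rfl
    intro p _
    norm_num
  | succ n ih =>
    rw [suzukiD]
    set u : ℚ⟦X⟧ := 1 - exp ℚ with hu
    set P₁ : ℚ⟦X⟧ := ∑ p ∈ range (j + 1),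
      cT k ((p : ℤ) + 1 + (n + 1) - k) • u ^ (p + 1) with hP₁
    have hcoeff0 : coeff 0 P₁ = 0 := by
      rw [hP₁, map_sum]
      apply Finset.sum_eq_zero
      intro p _
      rw [PowerSeries.coeff_smul, PowerSeries.coeff_zero_eq_constantCoeff_apply, map_pow, hu]
      simp [constantCoeff_exp]
    -- inner sums via IH and coefficient form
    have hinner : ∀ m ∈ range (j + 1),
        ((j + 1).choose m : ℚ) * bernoulli m * suzukiD k (n + 1) (j + 1 - m)
          = ((j + 1).factorial : ℚ) * ((bernoulli m / m.factorial) * coeff (j + 1 - m) P₁) := by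
      intro m hm
      rw [Finset.mem_range] at hm
      rw [ih (j + 1 - m),
        rhs_eq_coeff (j + 1 - m) (fun p => cT k ((p : ℤ) + (n + 1) - k))]
      -- extend coefficient to P₁ + constant
      have hJ : 1 ≤ j + 1 - m := by omega
      have hext : coeff (j + 1 - m)
            (∑ p ∈ range (j + 1 - m + 1), cT k ((p : ℤ) + (n + 1) - k) • u ^ p)
          = coeff (j + 1 - m) P₁ := by
        rw [Finset.sum_range_succ' (fun p => cT k ((p : ℤ) + (n + 1) - k) • u ^ p) (j + 1 - m)]
        rw [map_add, pow_zero]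
        have hconst : coeff (j + 1 - m) (cT k ((0 : ℤ) + (n + 1) - k) • (1 : ℚ⟦X⟧)) = 0 := by
          rw [PowerSeries.coeff_smul, PowerSeries.coeff_one, if_neg (by omega)]
          simp
        rw [show ((0 : ℕ) : ℤ) + (n + 1) - k = (0 : ℤ) + (n + 1) - k from by push_cast; ring] at *
        rw [hconst, add_zero, hP₁, map_sum, map_sum]
        -- compare sums over different ranges
        apply Finset.sum_subset_zero_on_sdiff
        · intro x hx
          rw [Finset.mem_range] at *
          omega
        · intro x hx
          rw [Finset.mem_sdiff, Finset.mem_range, Finset.mem_range] at hx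
          rw [PowerSeries.coeff_smul, coeff_u_pow_eq_zero (by omega)]
          simp
        · intro x _
          have hcast : ((x + 1 : ℕ) : ℤ) + ((n : ℤ) + 1) - k = (x : ℤ) + 1 + ((n : ℤ) + 1) - k := by
            push_cast; ring
          rw [hcast]
      rw [hext]
      -- choose/factorial arithmetic
      have hfac := Nat.choose_mul_factorial_mul_factorial (show m ≤ j + 1 by omega)
      have hm0 : (m.factorial : ℚ) ≠ 0 := Nat.cast_ne_zero.2 m.factorial_ne_zero
      have hfacQ : ((j + 1).choose m : ℚ) * (j + 1 - m).factorial
          = ((j + 1).factorial : ℚ) / m.factorial := by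
        rw [eq_div_iff hm0]
        have h7 : (((j + 1).choose m * m.factorial * (j + 1 - m).factorial : ℕ) : ℚ)
            = ((j + 1).factorial : ℚ) := by exact_mod_cast congrArg (fun t : ℕ => (t : ℚ)) hfac
        push_cast at h7
        linear_combination h7
      linear_combination (bernoulli m * coeff (j + 1 - m) P₁) * hfacQ
    rw [Finset.sum_congr rfl hinner, ← Finset.mul_sum]
    -- identify with coeff of product
    have hconv : (∑ m ∈ range (j + 1), (bernoulli m / m.factorial) * coeff (j + 1 - m) P₁)
        = coeff (j + 1) (bernoulliPowerSeries ℚ * P₁) := by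
      rw [PowerSeries.coeff_mul, Finset.Nat.sum_antidiagonal_eq_sum_range_succ_mk]
      conv_rhs => rw [Finset.sum_range_succ]
      rw [Nat.sub_self, hcoeff0, mul_zero, add_zero]
      apply Finset.sum_congr rfl
      intro m _
      rw [bernoulliPowerSeries, coeff_mk]
      simp
    rw [hconv]
    -- compute B * P₁
    have hBu : bernoulliPowerSeries ℚ * u = -X := by
      rw [hu, show (1 - exp ℚ) = -(exp ℚ - 1) from by ring, mul_neg,
        bernoulliPowerSeries_mul_exp_sub_one]
    have hBP : coeff (j + 1) (bernoulliPowerSeries ℚ * P₁)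
        = -∑ p ∈ range (j + 1), cT k ((p : ℤ) + 1 + (n + 1) - k) * coeff j (u ^ p) := by
      have hkey : ∀ p : ℕ, coeff (j + 1) (bernoulliPowerSeries ℚ * u ^ (p + 1))
          = -(coeff j (u ^ p)) := by
        intro p
        have h8 : bernoulliPowerSeries ℚ * u ^ (p + 1) = -(X * u ^ p) := by
          rw [pow_succ]
          calc bernoulliPowerSeries ℚ * (u ^ p * u)
              = bernoulliPowerSeries ℚ * u * u ^ p := by ring
            _ = -X * u ^ p := by rw [hBu]
            _ = -(X * u ^ p) := by ring
        rw [h8, map_neg, PowerSeries.coeff_succ_X_mul]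
      rw [hP₁, Finset.mul_sum, map_sum, ← Finset.sum_neg_distrib]
      apply Finset.sum_congr rfl
      intro p _
      rw [mul_smul_comm, PowerSeries.coeff_smul, hkey p, smul_eq_mul]
      ring
    rw [hBP]
    -- final algebra
    rw [rhs_eq_coeff j (fun p => cT k ((p : ℤ) + (((n + 1 : ℕ) : ℤ) + 1) - k)), map_sum]
    have hjf : ((j + 1).factorial : ℚ) = (j + 1) * j.factorial := by
      rw [Nat.factorial_succ]; push_cast; ring
    rw [hjf]
    have hj1 : ((j : ℚ) + 1) ≠ 0 := by positivity
    set S : ℚ := ∑ p ∈ range (j + 1),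
      cT k ((p : ℤ) + 1 + ((n : ℤ) + 1) - k) * coeff j (u ^ p) with hS
    have hLHS : -(1 / ((j : ℚ) + 1)) * (((j : ℚ) + 1) * (j.factorial : ℚ) * -S)
        = (j.factorial : ℚ) * S := by field_simp
    rw [hLHS, hS, Finset.mul_sum, Finset.mul_sum]
    apply Finset.sum_congr rfl
    intro p _
    rw [PowerSeries.coeff_smul, smul_eq_mul, ← hu]
    have harg : ((p : ℤ) + 1 + ((n : ℤ) + 1) - k) = ((p : ℤ) + (((n + 1 : ℕ) : ℤ) + 1) - k) := by
      push_cast; ring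
    rw [harg]

/-- for 1 ≤ k < i and j ≥ 0,
d_{(i,j,k)} = ∑_{p=0}^{j} (-1)^p p! S(j,p) ∑_{ℓ₁+⋯+ℓ_k=p+i-k} 1/((ℓ₁+1)⋯(ℓ_k+1)). -/
theorem stmt12 (i j k : ℕ) (hk : 1 ≤ k) (hki : k < i) :
    suzukiD k i j =
      ∑ p ∈ Finset.range (j + 1),
        (-1) ^ p * p.factorial * stirling2 j p *
          ∑ ℓ ∈ Finset.Nat.antidiagonalTuple k (p + i - k),
            ∏ r : Fin k, (1 : ℚ) / (ℓ r + 1) := by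
  obtain ⟨i', rfl⟩ : ∃ i', i = i' + 1 := ⟨i - 1, by omega⟩
  rw [gen k hk i' j]
  apply Finset.sum_congr rfl
  intro p hp
  congr 1
  simp only [cT]
  rw [if_neg (by omega)]
  have h1 : ((p : ℤ) + ((i' : ℤ) + 1) - k).toNat = p + (i' + 1) - k := by omega
  rw [h1, Tk]
end

section
/- For i ≤ k ≤ i+j, d_{(i,j,k)} = (-1)^{k-i} B_{i+j-k}^{(i)} · j!/(i+j-k)!, where B_n^{(i)} are the higher-order Bernoulli numbers. -/
open Finset PowerSeries

private lemma suzukiD_eq_zero (k : ℕ) : ∀ i, 1 ≤ i → ∀ j, i + j < k → suzukiD k i j = 0 := by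
  intro i
  induction i with
  | zero => omega
  | succ i ih =>
    rcases i with _ | i
    · intro _ j h
      rw [suzukiD, if_pos (by omega)]
    · intro _ j h
      rw [suzukiD]
      rw [Finset.sum_eq_zero, mul_zero]
      intro m hm
      simp only [mem_range] at hm
      rw [ih (by omega) (j + 1 - m) (by omega), mul_zero]

private lemma exp_sub_one_ne_zero : (exp ℚ - 1 : PowerSeries ℚ) ≠ 0 := by
  intro h
  have := congrArg (coeff 1) h
  simp [coeff_exp] at this

private lemma bernPS : (PowerSeries.mk fun n => (bernoulli n : ℚ) / n.factorial) * (exp ℚ - 1) = X := by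
  have h := bernoulliPowerSeries_mul_exp_sub_one ℚ
  have : (bernoulliPowerSeries ℚ) = (PowerSeries.mk fun n => (bernoulli n : ℚ) / n.factorial) := by
    ext n; simp [bernoulliPowerSeries, coeff_mk]
  rwa [this] at h

private lemma stmt13_aux (k : ℕ) : ∀ i, 1 ≤ i → ∀ j, i ≤ k → k ≤ i + j → ∀ B : ℕ → ℚ,
    (PowerSeries.mk fun n => B n / n.factorial) * (PowerSeries.exp ℚ - 1) ^ i =
      (PowerSeries.X : PowerSeries ℚ) ^ i →
    suzukiD k i j = (-1) ^ (k - i) * B (i + j - k) * j.factorial / (i + j - k).factorial := by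
  intro i
  induction i with
  | zero => omega
  | succ i ih =>
    rcases i with _ | i
    · -- level 1
      intro _ j hik hk B hB
      rw [pow_one, pow_one] at hB
      have hEq : (PowerSeries.mk fun n => B n / n.factorial)
          = (PowerSeries.mk fun n => (bernoulli n : ℚ) / n.factorial) :=
        mul_right_cancel₀ exp_sub_one_ne_zero (by rw [hB, bernPS])
      have hBn : ∀ n, B n = bernoulli n := by
        intro n
        have h2 := congrArg (coeff n) hEq
        simp only [coeff_mk] at h2
        have hf : (n.factorial : ℚ) ≠ 0 := Nat.cast_ne_zero.mpr n.factorial_ne_zero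
        field_simp at h2
        exact h2
      rw [suzukiD, if_neg (by omega)]
      have h1 : 0 + 1 + j - k = j + 1 - k := by omega
      rw [h1, hBn]
      have hs : (-1 : ℚ) ^ j * (-1) ^ (j + 1 - k) = (-1) ^ (k - (0 + 1)) := by
        rw [← pow_add]
        have h2 : j + (j + 1 - k) = (k - (0 + 1)) + 2 * (j + 1 - k) := by omega
        rw [h2, pow_add, pow_mul]
        simp
      rw [← hs]
      ring
    · -- level i + 2
      intro _ j hik hk B hB
      set E : PowerSeries ℚ := exp ℚ - 1 with hE
      have hEne : E ≠ 0 := exp_sub_one_ne_zero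
      have hXconst : constantCoeff ((PowerSeries.mk fun n => B n / n.factorial) * E) = 0 := by
        simp [hE]
      obtain ⟨G, hG⟩ := X_dvd_iff.mpr hXconst
      set B' : ℕ → ℚ := fun n => n.factorial * coeff n G with hB'def
      have hmkG : (PowerSeries.mk fun n => B' n / n.factorial) = G := by
        ext n
        have hf : (n.factorial : ℚ) ≠ 0 := Nat.cast_ne_zero.mpr n.factorial_ne_zero
        simp only [coeff_mk, hB'def]
        field_simp
      have hXne : (X : PowerSeries ℚ) ≠ 0 := X_ne_zero
      have hG' : G * E ^ (i + 1) = X ^ (i + 1) := by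
        apply mul_left_cancel₀ hXne
        calc X * (G * E ^ (i + 1))
            = ((PowerSeries.mk fun n => B n / n.factorial) * E) * E ^ (i + 1) := by rw [hG]; ring
          _ = (PowerSeries.mk fun n => B n / n.factorial) * E ^ (i + 2) := by ring
          _ = X ^ (i + 2) := hB
          _ = X * X ^ (i + 1) := by ring
      have hconv : (PowerSeries.mk fun n => B n / n.factorial)
          = (PowerSeries.mk fun n => (bernoulli n : ℚ) / n.factorial) * G := by
        apply mul_right_cancel₀ (pow_ne_zero (i + 2) hEne)
        calc (PowerSeries.mk fun n => B n / n.factorial) * E ^ (i + 2) = X ^ (i + 2) := hB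
          _ = X * X ^ (i + 1) := by ring
          _ = ((PowerSeries.mk fun n => (bernoulli n : ℚ) / n.factorial) * E) * (G * E ^ (i + 1)) := by
              rw [bernPS, hG']
          _ = ((PowerSeries.mk fun n => (bernoulli n : ℚ) / n.factorial) * G) * E ^ (i + 2) := by ring
      have hcoeff : ∀ N : ℕ, B N / N.factorial
          = ∑ m ∈ range (N + 1),
              (bernoulli m : ℚ) / m.factorial * (B' (N - m) / (N - m).factorial) := by
        intro N
        have h3 := congrArg (coeff N) hconv
        rw [← hmkG, coeff_mk, coeff_mul, Finset.Nat.sum_antidiagonal_eq_sum_range_succ_mk] at h3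
        simpa only [coeff_mk] using h3
      set N := i + 1 + 1 + j - k with hN
      have hNj : N ≤ j := by omega
      rw [suzukiD]
      have hsum : ∑ m ∈ Finset.range (j + 1),
            ((j + 1).choose m : ℚ) * bernoulli m * suzukiD k (i + 1) (j + 1 - m)
          = ∑ m ∈ Finset.range (N + 1),
            (-1 : ℚ) ^ (k - (i + 1)) * (j + 1).factorial *
              ((bernoulli m : ℚ) / m.factorial * (B' (N - m) / (N - m).factorial)) := by
        have h0 : ∑ m ∈ Finset.range (j + 1),
              ((j + 1).choose m : ℚ) * bernoulli m * suzukiD k (i + 1) (j + 1 - m)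
            = ∑ m ∈ Finset.range (N + 1),
              ((j + 1).choose m : ℚ) * bernoulli m * suzukiD k (i + 1) (j + 1 - m) := by
          refine (Finset.sum_subset (Finset.range_subset_range.mpr (show N + 1 ≤ j + 1 by omega)) ?_).symm
          intro m hm hm'
          simp only [mem_range] at hm hm'
          rw [suzukiD_eq_zero k (i + 1) (by omega) (j + 1 - m) (by omega), mul_zero]
        rw [h0]
        apply Finset.sum_congr rfl
        · intro m hm
          simp only [mem_range] at hm
          have hmN : m ≤ N := by omega
          rw [ih (by omega) (j + 1 - m) (by omega) (by omega) B' (by rw [hmkG]; exact hG')]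
          have h1 : i + 1 + (j + 1 - m) - k = N - m := by omega
          rw [h1, Nat.cast_choose ℚ (show m ≤ j + 1 by omega)]
          have hf1 : (m.factorial : ℚ) ≠ 0 := Nat.cast_ne_zero.mpr m.factorial_ne_zero
          have hf2 : (((j + 1) - m).factorial : ℚ) ≠ 0 := Nat.cast_ne_zero.mpr (Nat.factorial_ne_zero _)
          have hf3 : (((N - m)).factorial : ℚ) ≠ 0 := Nat.cast_ne_zero.mpr (Nat.factorial_ne_zero _)
          field_simp
      rw [hsum, ← Finset.mul_sum, ← hcoeff]
      have hs : (-1 : ℚ) ^ (k - (i + 1)) = (-1) * (-1) ^ (k - (i + 1 + 1)) := by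
        have h2 : k - (i + 1) = (k - (i + 1 + 1)) + 1 := by omega
        rw [h2, pow_succ]
        ring
      rw [hs]
      have hj1 : ((j : ℚ) + 1) ≠ 0 := by positivity
      have hfN : ((N.factorial : ℚ)) ≠ 0 := Nat.cast_ne_zero.mpr (Nat.factorial_ne_zero _)
      rw [Nat.factorial_succ]
      push_cast
      field_simp

/-- with B_n^{(i)} the higher-order Bernoulli numbers, defined by
(t/(e^t-1))^i = ∑ B_n^{(i)} t^n/n! (equivalently
(∑ B_n^{(i)} t^n/n!)·(e^t-1)^i = t^i), for i ≤ k ≤ i+j one has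
d_{(i,j,k)} = (-1)^{k-i} B_{i+j-k}^{(i)} · j!/(i+j-k)!. -/
theorem stmt13 (i j k : ℕ) (hi : 1 ≤ i) (hik : i ≤ k) (hk : k ≤ i + j) (B : ℕ → ℚ)
    (hB : (PowerSeries.mk fun n => B n / n.factorial) * (PowerSeries.exp ℚ - 1) ^ i =
      (PowerSeries.X : PowerSeries ℚ) ^ i) :
    suzukiD k i j = (-1) ^ (k - i) * B (i + j - k) * j.factorial / (i + j - k).factorial :=
  stmt13_aux k i hi j hik hk B hB
end
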